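/- arXiv:1305.3414 — 7 statements merged into one kernel-verified Lean document; each statement's English description precedes it below -/
import Mathlib

section
/- Let G be a bipartite graph with orientation σ such that Sp_S(G^σ) = i·Sp(G), and let e = xy be an edge of G with corresponding arc ê. Then the oriented graph G^σ − ê satisfies Sp_S(G^σ − ê) = i·Sp(G − e). -/
open Matrix

def IsSkewAdj {V : Type*} [Fintype V] [DecidableEq V]
    (G : SimpleGraph V) (S : Matrix V V ℝ) : Prop :=
  (∀ i j, G.Adj i j → (S i j = 1 ∨ S i j = -1)) ∧
  (∀ i j, ¬ G.Adj i j → S i j = 0) ∧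
  Sᵀ = -S

noncomputable def cSpec {V : Type*} [Fintype V] [DecidableEq V]
    (S : Matrix V V ℝ) : Multiset ℂ :=
  ((S.map (Complex.ofReal)).charpoly).roots

noncomputable def adjSpec {V : Type*} [Fintype V] [DecidableEq V]
    (G : SimpleGraph V) : Multiset ℂ := by
  classical exact cSpec (G.adjMatrix ℝ)

/-!
Expanding `det (X - M)` over permutations, a zero-diagonal matrix has characteristic polynomial
`∑ σ, w_M(σ) X ^ (n - |supp σ|)`, where the weight `w_M = M.permWeight` is multiplicative over
the disjoint cycle factors of `σ`. So matrices with equal cycle weights have equal characteristic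
polynomials. Conversely, for `M = S` and `N = i A(G)`, equal characteristic polynomials force
equal cycle weights: a cycle of length `r` along the edges of `G` has `w_N = -i ^ r`, while
`|w_M| ≤ 1`, and both vanish on every other cycle. Comparing the coefficients of `X ^ (n - r)`,
with the non-cyclic permutations handled by induction on `r`, the `w_M` of the `r`-cycles along
edges sum to their number times the unit `-i ^ r`, which forces each of them to equal `-i ^ r`.
Deleting the edge `xy` kills exactly the cycles through it on both sides and leaves the other
cycle weights unchanged, so the characteristic polynomials stay equal.
-/

open Polynomial Finset Equiv

theorem Complex.forall_eq_of_sum_eq_card_mul {ι : Type*} {s : Finset ι} {f : ι → ℂ} {κ : ℂ}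
    (hκ : ‖κ‖ = 1) (hf : ∀ i ∈ s, ‖f i‖ ≤ 1) (hsum : ∑ i ∈ s, f i = #s * κ) :
    ∀ i ∈ s, f i = κ := by
  have hκκ : (starRingEnd ℂ) κ * κ = 1 := by
    rw [← Complex.normSq_eq_conj_mul_self, Complex.normSq_eq_norm_sq, hκ]; simp
  have hnorm : ∀ i ∈ s, ‖(starRingEnd ℂ) κ * f i‖ ≤ 1 := fun i hi => by simpa [hκ] using hf i hi
  have hre : ∑ i ∈ s, ((starRingEnd ℂ) κ * f i).re = ∑ _i ∈ s, (1 : ℝ) := by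
    rw [← Complex.re_sum, ← mul_sum, hsum, mul_left_comm, hκκ]; simp
  intro i hi
  have h1 : ((starRingEnd ℂ) κ * f i).re = 1 :=
    (sum_eq_sum_iff_of_le fun j hj => (Complex.re_le_norm _).trans (hnorm j hj)).1 hre i hi
  have him : ((starRingEnd ℂ) κ * f i).im = 0 := Complex.abs_re_eq_norm.1 <| by
    rw [h1, abs_one]; exact le_antisymm (h1 ▸ Complex.re_le_norm _) (hnorm i hi)
  have h2 : (starRingEnd ℂ) κ * f i = 1 := Complex.ext (by simpa using h1) (by simpa using him)
  calc f i = (κ * (starRingEnd ℂ) κ) * f i := by rw [mul_comm κ, hκκ, one_mul]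
    _ = κ := by rw [mul_assoc, h2, mul_one]

namespace Matrix

variable {V R : Type*} [Fintype V] [DecidableEq V] [CommRing R]

noncomputable def permWeight (M : Matrix V V R) (σ : Perm V) : R :=
  ((Perm.sign σ : ℤ) : R) * ∏ i ∈ σ.support, -M (σ i) i

theorem permWeight_one (M : Matrix V V R) : permWeight M 1 = 1 := by simp [permWeight]

theorem permWeight_mul_of_disjoint (M : Matrix V V R) {σ τ : Perm V} (h : σ.Disjoint τ) :
    permWeight M (σ * τ) = permWeight M σ * permWeight M τ := by
  have hσ : ∀ i ∈ σ.support, -M ((σ * τ) i) i = -M (σ i) i := fun i hi => by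
    rw [Perm.mul_apply, (h i).resolve_left (Perm.mem_support.1 hi)]
  have hτ : ∀ i ∈ τ.support, -M ((σ * τ) i) i = -M (τ i) i := fun i hi => by
    rw [Perm.mul_apply, (h (τ i)).resolve_right (Perm.mem_support.1 (Perm.apply_mem_support.2 hi))]
  rw [permWeight, h.support_mul, prod_union h.disjoint_support, prod_congr rfl hσ,
    prod_congr rfl hτ, Perm.sign_mul, Units.val_mul, Int.cast_mul, permWeight, permWeight]
  ring

theorem permWeight_eq_prod_cycleFactorsFinset (M : Matrix V V R) (σ : Perm V) :
    permWeight M σ = ∏ c ∈ σ.cycleFactorsFinset, permWeight M c := by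
  induction σ using Perm.cycle_induction_on with
  | base_one => simp [permWeight_one]
  | base_cycles σ hσ => simp [hσ.cycleFactorsFinset_eq_singleton]
  | induction_disjoint σ τ hd _ ihσ ihτ =>
    rw [permWeight_mul_of_disjoint M hd, ihσ, ihτ, hd.cycleFactorsFinset_mul_eq_union,
      prod_union hd.disjoint_cycleFactorsFinset]

theorem permWeight_eq_zero {M : Matrix V V R} {σ : Perm V} {i : V} (hi : i ∈ σ.support)
    (h : M (σ i) i = 0) : permWeight M σ = 0 := by
  rw [permWeight, prod_eq_zero hi (by rw [h, neg_zero]), mul_zero]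

theorem permWeight_congr {M N : Matrix V V R} {σ : Perm V}
    (h : ∀ i ∈ σ.support, M (σ i) i = N (σ i) i) : permWeight M σ = permWeight N σ := by
  simp only [permWeight, prod_congr rfl fun i hi => congrArg Neg.neg (h i hi)]

theorem permWeight_smul (c : R) (M : Matrix V V R) (σ : Perm V) :
    permWeight (c • M) σ = c ^ #σ.support * permWeight M σ := by
  simp only [permWeight, smul_apply, smul_eq_mul, ← mul_neg, prod_mul_distrib, prod_const]
  ring

theorem charpoly_eq_sum_permWeight {M : Matrix V V R} (hM : ∀ i, M i i = 0) :
    M.charpoly = ∑ σ : Perm V, C (permWeight M σ) * X ^ (Fintype.card V - #σ.support) := by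
  rw [charpoly, det_apply]
  refine sum_congr rfl fun σ _ => ?_
  have hfixed : ∏ i ∈ σ.supportᶜ, charmatrix M (σ i) i = X ^ (Fintype.card V - #σ.support) := by
    rw [prod_congr rfl fun i hi => by
      rw [Perm.notMem_support.1 (mem_compl.1 hi), charmatrix_apply_eq, hM, map_zero, sub_zero],
      prod_const, card_compl]
  have hmoved : ∏ i ∈ σ.support, charmatrix M (σ i) i = C (∏ i ∈ σ.support, -M (σ i) i) := by
    rw [map_prod]
    exact prod_congr rfl fun i hi => by
      rw [charmatrix_apply_ne _ _ _ (Perm.mem_support.1 hi), map_neg]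
  rw [← prod_mul_prod_compl σ.support, hfixed, hmoved, permWeight, Units.smul_def, zsmul_eq_mul,
    map_mul, map_intCast, mul_assoc]

theorem coeff_charpoly_eq_sum_permWeight {M : Matrix V V R} (hM : ∀ i, M i i = 0) (k : ℕ) :
    M.charpoly.coeff k =
      ∑ σ ∈ univ.filter (fun σ : Perm V => Fintype.card V - #σ.support = k), permWeight M σ := by
  simp only [charpoly_eq_sum_permWeight hM, finsetSum_coeff, coeff_C_mul_X_pow, sum_filter]
  exact sum_congr rfl fun σ _ => by simp only [eq_comm]

theorem charpoly_eq_of_permWeight_cycle_eq {M N : Matrix V V R} (hM : ∀ i, M i i = 0)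
    (hN : ∀ i, N i i = 0) (h : ∀ c : Perm V, c.IsCycle → permWeight M c = permWeight N c) :
    M.charpoly = N.charpoly := by
  rw [charpoly_eq_sum_permWeight hM, charpoly_eq_sum_permWeight hN]
  refine sum_congr rfl fun σ _ => ?_
  rw [permWeight_eq_prod_cycleFactorsFinset M, permWeight_eq_prod_cycleFactorsFinset N,
    prod_congr rfl fun c hc => h c (Perm.mem_cycleFactorsFinset_iff.1 hc).1]

theorem charpoly_smul_eq_scaleRoots [Nontrivial R] (c : R) {M : Matrix V V R}
    (hM : ∀ i, M i i = 0) : (c • M).charpoly = M.charpoly.scaleRoots c := by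
  ext k
  have hcM : ∀ i, (c • M) i i = 0 := fun i => by rw [smul_apply, hM, smul_zero]
  rw [coeff_scaleRoots, charpoly_natDegree_eq_dim, coeff_charpoly_eq_sum_permWeight hcM,
    coeff_charpoly_eq_sum_permWeight hM, sum_mul]
  refine sum_congr rfl fun σ hσ => ?_
  have hcard : #σ.support ≤ Fintype.card V := card_le_univ _
  rw [permWeight_smul, mul_comm, ← (mem_filter.1 hσ).2, Nat.sub_sub_self hcard]

theorem roots_charpoly_smul [IsDomain R] {c : R} (hc : IsUnit c) {M : Matrix V V R}
    (hM : ∀ i, M i i = 0) : (c • M).charpoly.roots = M.charpoly.roots.map (c * ·) := by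
  rw [charpoly_smul_eq_scaleRoots c hM, roots_scaleRoots _ hc]

theorem charpoly_eq_of_roots_eq {K : Type*} [Field K] [IsAlgClosed K] {M N : Matrix V V K}
    (h : M.charpoly.roots = N.charpoly.roots) :
    M.charpoly = N.charpoly := by
  rw [(IsAlgClosed.splits _).eq_prod_roots_of_monic M.charpoly_monic,
    (IsAlgClosed.splits _).eq_prod_roots_of_monic N.charpoly_monic, h]

theorem norm_permWeight_le_one {𝕜 : Type*} [NormedField 𝕜] {M : Matrix V V 𝕜}
    (hM : ∀ i j, ‖M i j‖ ≤ 1) (σ : Perm V) : ‖M.permWeight σ‖ ≤ 1 := by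
  have hsign : ‖((Perm.sign σ : ℤ) : 𝕜)‖ = 1 := by
    rcases Int.units_eq_one_or (Perm.sign σ) with h | h <;> simp [h]
  rw [permWeight, norm_mul, hsign, one_mul, norm_prod]
  exact prod_le_one (fun _ _ => norm_nonneg _) fun i _ => (norm_neg (M (σ i) i)).trans_le (hM _ _)

end Matrix

theorem Equiv.Perm.card_support_lt_of_mem_cycleFactorsFinset {α : Type*} [Fintype α]
    [DecidableEq α] {σ c : Perm α} (hσ : ¬σ.IsCycle) (hc : c ∈ σ.cycleFactorsFinset) :
    #c.support < #σ.support := by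
  refine card_lt_card ((mem_cycleFactorsFinset_support_le hc).ssubset_of_ne fun heq => hσ ?_)
  have hcσ : σ = c := Perm.support_congr heq.ge fun x hx =>
    ((Perm.mem_cycleFactorsFinset_iff.1 hc).2 x hx).symm
  exact hcσ ▸ (Perm.mem_cycleFactorsFinset_iff.1 hc).1

namespace SimpleGraph

variable {V : Type*} [Fintype V] [DecidableEq V] (G : SimpleGraph V)

def FollowsEdges (σ : Perm V) : Prop := ∀ i ∈ σ.support, G.Adj (σ i) i

variable {G}

theorem permWeight_eq_zero_of_not_followsEdges {R : Type*} [CommRing R] {M : Matrix V V R}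
    (hM : ∀ i j, ¬G.Adj i j → M i j = 0) {σ : Perm V} (hσ : ¬G.FollowsEdges σ) :
    M.permWeight σ = 0 := by
  obtain ⟨i, hi, hadj⟩ := not_forall₂.1 hσ
  exact Matrix.permWeight_eq_zero hi (hM _ _ hadj)

theorem permWeight_adjMatrix {R : Type*} [CommRing R] [DecidableRel G.Adj] {c : Perm V}
    (hc : c.IsCycle) (hG : G.FollowsEdges c) : (G.adjMatrix R).permWeight c = -1 := by
  rw [Matrix.permWeight, prod_congr rfl fun i hi => by rw [adjMatrix_apply, if_pos (hG i hi)],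
    prod_const, hc.sign]
  push_cast
  rw [neg_mul, ← mul_pow, neg_one_mul, neg_neg, one_pow]

theorem permWeight_I_smul_adjMatrix [DecidableRel G.Adj] {c : Perm V} (hc : c.IsCycle)
    (hG : G.FollowsEdges c) :
    (Complex.I • G.adjMatrix ℂ).permWeight c = -Complex.I ^ #c.support := by
  rw [Matrix.permWeight_smul, permWeight_adjMatrix hc hG, mul_neg_one]

variable (G) in
noncomputable def edgeCycles (r : ℕ) : Finset (Perm V) := by
  classical exact univ.filter fun σ => σ.IsCycle ∧ #σ.support = r ∧ G.FollowsEdges σ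

theorem mem_edgeCycles {r : ℕ} {σ : Perm V} :
    σ ∈ G.edgeCycles r ↔ σ.IsCycle ∧ #σ.support = r ∧ G.FollowsEdges σ := by
  simp [edgeCycles]

theorem sum_permWeight_edgeCycles_eq {R : Type*} [CommRing R] {M N : Matrix V V R}
    (hM : ∀ i j, ¬G.Adj i j → M i j = 0) (hN : ∀ i j, ¬G.Adj i j → N i j = 0)
    (h : M.charpoly = N.charpoly) (r : ℕ)
    (ih : ∀ c : Perm V, c.IsCycle → #c.support < r → M.permWeight c = N.permWeight c) :
    ∑ σ ∈ G.edgeCycles r, M.permWeight σ = ∑ σ ∈ G.edgeCycles r, N.permWeight σ := by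
  classical
  set level := univ.filter fun σ : Perm V => Fintype.card V - #σ.support = Fintype.card V - r
  have hlevel : ∑ σ ∈ level, (M.permWeight σ - N.permWeight σ) = 0 := by
    rw [sum_sub_distrib, ← Matrix.coeff_charpoly_eq_sum_permWeight fun i => hM i i G.irrefl,
      ← Matrix.coeff_charpoly_eq_sum_permWeight fun i => hN i i G.irrefl, h, sub_self]
  have hsub : G.edgeCycles r ⊆ level := fun σ hσ => mem_filter.2 ⟨mem_univ _, by
    rw [(mem_edgeCycles.1 hσ).2.1]⟩
  have hoff : ∀ σ ∈ level, σ ∉ G.edgeCycles r → M.permWeight σ - N.permWeight σ = 0 := by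
    intro σ hσ hσr
    have hle : #σ.support ≤ r := by
      have := (mem_filter.1 hσ).2
      have := card_le_univ σ.support
      omega
    rw [sub_eq_zero]
    by_cases hσc : σ.IsCycle
    · rcases hle.lt_or_eq with hlt | heq
      · exact ih σ hσc hlt
      · have hσG : ¬G.FollowsEdges σ := fun hG => hσr (mem_edgeCycles.2 ⟨hσc, heq, hG⟩)
        rw [permWeight_eq_zero_of_not_followsEdges hM hσG,
          permWeight_eq_zero_of_not_followsEdges hN hσG]
    · rw [Matrix.permWeight_eq_prod_cycleFactorsFinset,
        Matrix.permWeight_eq_prod_cycleFactorsFinset]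
      exact prod_congr rfl fun d hd => ih d (Perm.mem_cycleFactorsFinset_iff.1 hd).1
        ((Perm.card_support_lt_of_mem_cycleFactorsFinset hσc hd).trans_le hle)
  rw [← sub_eq_zero, ← sum_sub_distrib, sum_subset hsub hoff, hlevel]

theorem permWeight_eq_of_charpoly_eq_I_smul_adjMatrix [DecidableRel G.Adj] {M : Matrix V V ℂ}
    (hM0 : ∀ i j, ¬G.Adj i j → M i j = 0) (hM1 : ∀ i j, ‖M i j‖ ≤ 1)
    (h : M.charpoly = (Complex.I • G.adjMatrix ℂ).charpoly) {c : Perm V} (hc : c.IsCycle) :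
    M.permWeight c = (Complex.I • G.adjMatrix ℂ).permWeight c := by
  have hN0 : ∀ i j, ¬G.Adj i j → (Complex.I • G.adjMatrix ℂ) i j = 0 := fun i j hij => by
    simp [hij]
  induction hr : #c.support using Nat.strong_induction_on generalizing c with
  | _ r ih =>
  have hsum : ∑ σ ∈ G.edgeCycles r, M.permWeight σ = #(G.edgeCycles r) * -Complex.I ^ r := by
    rw [sum_permWeight_edgeCycles_eq hM0 hN0 h r fun d hd hlt => ih _ hlt hd rfl,
      sum_congr rfl fun σ hσ => by
        obtain ⟨hσc, hσr, hσG⟩ := mem_edgeCycles.1 hσ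
        rw [permWeight_I_smul_adjMatrix hσc hσG, hσr],
      sum_const, nsmul_eq_mul]
  by_cases hcG : G.FollowsEdges c
  · rw [Complex.forall_eq_of_sum_eq_card_mul (by simp)
      (fun σ _ => Matrix.norm_permWeight_le_one hM1 σ) hsum c (mem_edgeCycles.2 ⟨hc, hr, hcG⟩),
      permWeight_I_smul_adjMatrix hc hcG, hr]
  · rw [permWeight_eq_zero_of_not_followsEdges hM0 hcG,
      permWeight_eq_zero_of_not_followsEdges hN0 hcG]

theorem charpoly_eq_I_smul_adjMatrix_of_le [DecidableRel G.Adj] {H : SimpleGraph V}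
    [DecidableRel H.Adj] (hHG : H ≤ G) {M M' : Matrix V V ℂ}
    (hM : ∀ c : Perm V, c.IsCycle → M.permWeight c = (Complex.I • G.adjMatrix ℂ).permWeight c)
    (hM'H : ∀ i j, H.Adj i j → M' i j = M i j) (hM'0 : ∀ i j, ¬H.Adj i j → M' i j = 0) :
    M'.charpoly = (Complex.I • H.adjMatrix ℂ).charpoly := by
  have hN0 : ∀ i j, ¬H.Adj i j → (Complex.I • H.adjMatrix ℂ) i j = 0 := fun i j hij => by
    simp [hij]
  refine Matrix.charpoly_eq_of_permWeight_cycle_eq (fun i => hM'0 i i H.irrefl)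
    (fun i => hN0 i i H.irrefl) fun c hc => ?_
  by_cases hcH : H.FollowsEdges c
  · rw [Matrix.permWeight_congr fun i hi => hM'H _ _ (hcH i hi), hM c hc,
      permWeight_I_smul_adjMatrix hc fun i hi => hHG (hcH i hi), permWeight_I_smul_adjMatrix hc hcH]
  · rw [permWeight_eq_zero_of_not_followsEdges hM'0 hcH,
      permWeight_eq_zero_of_not_followsEdges hN0 hcH]

end SimpleGraph

theorem map_I_mul_adjSpec {V : Type*} [Fintype V] [DecidableEq V] (G : SimpleGraph V)
    [DecidableRel G.Adj] :
    (adjSpec G).map (fun z => Complex.I * z) = (Complex.I • G.adjMatrix ℂ).charpoly.roots := by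
  have hmap : (G.adjMatrix ℝ).map Complex.ofReal = G.adjMatrix ℂ := by
    ext i j; by_cases h : G.Adj i j <;> simp [h]
  rw [Matrix.roots_charpoly_smul (Ne.isUnit Complex.I_ne_zero) fun i => by simp, adjSpec, cSpec,
    ← hmap]
  congr!

namespace IsSkewAdj

variable {V : Type*} [Fintype V] [DecidableEq V] {G : SimpleGraph V} {S : Matrix V V ℝ}

theorem map_ofReal_eq_zero (hS : IsSkewAdj G S) {i j : V} (h : ¬G.Adj i j) :
    S.map Complex.ofReal i j = 0 := by
  simp [hS.2.1 i j h]

theorem norm_map_ofReal_le_one (hS : IsSkewAdj G S) (i j : V) :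
    ‖S.map Complex.ofReal i j‖ ≤ 1 := by
  by_cases h : G.Adj i j
  · rcases hS.1 i j h with h1 | h1 <;> simp [h1]
  · simp [hS.2.1 i j h]

theorem deleteEdge (hS : IsSkewAdj G S) (x y : V) :
    IsSkewAdj (G.deleteEdges {s(x, y)})
      (of fun i j => if (i = x ∧ j = y) ∨ (i = y ∧ j = x) then 0 else S i j) := by
  have hdel : ∀ i j, (G.deleteEdges {s(x, y)}).Adj i j ↔
      G.Adj i j ∧ ¬((i = x ∧ j = y) ∨ (i = y ∧ j = x)) := fun i j => by
    simp [SimpleGraph.deleteEdges_adj]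
  refine ⟨fun i j hij => ?_, fun i j hij => ?_, ?_⟩
  · rw [of_apply, if_neg ((hdel i j).1 hij).2]
    exact hS.1 i j ((hdel i j).1 hij).1
  · rw [of_apply]
    split_ifs with hxy
    · rfl
    · exact hS.2.1 i j fun hG => hij ((hdel i j).2 ⟨hG, hxy⟩)
  · ext i j
    have hji : S j i = -S i j := congrFun (congrFun hS.2.2 i) j
    have hswap : ((j = x ∧ i = y) ∨ (j = y ∧ i = x)) ↔ ((i = x ∧ j = y) ∨ (i = y ∧ j = x)) := by
      tauto
    by_cases h : (i = x ∧ j = y) ∨ (i = y ∧ j = x) <;> simp [h, hswap, hji]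

end IsSkewAdj

theorem spec_deleteEdge_general
    {V : Type*} [Fintype V] [DecidableEq V]
    (G : SimpleGraph V)
    (S : Matrix V V ℝ) (hS : IsSkewAdj G S)
    (hspec : cSpec S = (adjSpec G).map (fun z => Complex.I * z))
    (x y : V) :
    cSpec (fun i j => if (i = x ∧ j = y) ∨ (i = y ∧ j = x) then 0 else S i j) =
      (adjSpec (G.deleteEdges {s(x, y)})).map (fun z => Complex.I * z) := by
  classical
  have hcycles := fun (c : Perm V) (hc : c.IsCycle) =>
    SimpleGraph.permWeight_eq_of_charpoly_eq_I_smul_adjMatrix (fun _ _ => hS.map_ofReal_eq_zero)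
      hS.norm_map_ofReal_le_one
      (Matrix.charpoly_eq_of_roots_eq (hspec.trans (map_I_mul_adjSpec G))) hc
  set S' : Matrix V V ℝ := of fun i j => if (i = x ∧ j = y) ∨ (i = y ∧ j = x) then 0 else S i j
  have hagree : ∀ i j, (G.deleteEdges {s(x, y)}).Adj i j →
      S'.map Complex.ofReal i j = S.map Complex.ofReal i j := fun i j hij => by
    simp_all [S', SimpleGraph.deleteEdges_adj]
  change cSpec S' = _
  rw [map_I_mul_adjSpec, cSpec, SimpleGraph.charpoly_eq_I_smul_adjMatrix_of_le
    (G.deleteEdges_le _) hcycles hagree fun _ _ => (hS.deleteEdge x y).map_ofReal_eq_zero]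

/-- Deleting an edge: if `G` is bipartite with orientation `σ` such that
`Sp_S(G^σ) = i·Sp(G)`, and `e = xy` is an edge with corresponding arc `ê`, then
`Sp_S(G^σ - ê) = i·Sp(G - e)`. -/
theorem spec_deleteEdge
    {V : Type*} [Fintype V] [DecidableEq V]
    (G : SimpleGraph V) (X : Finset V)
    (hbip : ∀ i j, G.Adj i j → (i ∈ X ↔ j ∉ X))
    (S : Matrix V V ℝ) (hS : IsSkewAdj G S)
    (hspec : cSpec S = (adjSpec G).map (fun z => Complex.I * z))
    (x y : V) (hxy : G.Adj x y) :
    cSpec (fun i j => if (i = x ∧ j = y) ∨ (i = y ∧ j = x) then 0 else S i j) =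
      (adjSpec (G.deleteEdges {s(x, y)})).map (fun z => Complex.I * z) :=
  spec_deleteEdge_general G S hS hspec x y
end

section
/- Let G be a bipartite graph with orientation σ. If every chordless cycle of G is oriented uniformly in G^σ, then every cycle of G is oriented uniformly in G^σ, and consequently Sp_S(G^σ) = i·Sp(G). -/
open Matrix

def IsCycle {V : Type*} (G : SimpleGraph V) {m : ℕ} (c : ZMod m → V) : Prop :=
  3 ≤ m ∧ Function.Injective c ∧ ∀ k : ZMod m, G.Adj (c k) (c (k + 1))

/-- The cycle `c` is chordless: no edge of `G` joins two non-consecutive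
vertices of the cycle. -/
def Chordless {V : Type*} (G : SimpleGraph V) {m : ℕ} (c : ZMod m → V) : Prop :=
  ∀ k k' : ZMod m, k ≠ k' → k' ≠ k + 1 → k ≠ k' + 1 → ¬ G.Adj (c k) (c k')

noncomputable def clockwiseArcs {V : Type*} {m : ℕ} [NeZero m]
    (S : Matrix V V ℝ) (c : ZMod m → V) : ℕ :=
  (Finset.univ.filter (fun k : ZMod m => S (c k) (c (k + 1)) = 1)).card

def UniformCycle {V : Type*} {m : ℕ} [NeZero m]
    (S : Matrix V V ℝ) (c : ZMod m → V) : Prop :=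
  clockwiseArcs S c ≡ m / 2 [MOD 2]

/-!
Put the gain `g a b = -i S_ab` on every edge, so that `g a b * g b a = 1`. On an even cycle of
length `2ℓ` the product of the gains is `(-1)^(ℓ + #clockwise arcs)`, so "uniform" means
"gain `1`". A chord splits a cycle into two shorter cycles, and since the chord is traversed once
in each direction the gain of the cycle is the product of their gains; by induction on the length
every cycle has gain `1`. A gain graph in which every cycle has gain `1` carries a potential
`f` with `f a = g a b * f b` on every edge: add the edges one at a time, and a new edge either
closes a cycle, whose gain forces consistency, or joins two components, one of which is rescaled.
The potential conjugates `i A` into `S` by the diagonal matrix `diag f`, so `Sp_S = i Sp(A)`.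
-/

open Finset

lemma ZMod.prod_univ_eq_prod_range {α : Type*} [CommMonoid α] {m : ℕ} [NeZero m]
    (F : ZMod m → α) : ∏ k, F k = ∏ n ∈ range m, F n := by
  obtain ⟨n, rfl⟩ : ∃ n, m = n + 1 := Nat.exists_eq_succ_of_ne_zero (NeZero.ne m)
  rw [← Fin.prod_univ_eq_prod_range]
  exact Fintype.prod_congr _ _ fun k => congrArg F (ZMod.natCast_zmod_val (n := n + 1) k).symm

lemma eq_prod_range_mul_of_forall_lt {α : Type*} [CommMonoid α] {x a : ℕ → α} {l : ℕ}
    (h : ∀ n < l, x n = a n * x (n + 1)) : x 0 = (∏ n ∈ range l, a n) * x l := by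
  induction l with
  | zero => simp
  | succ l ih =>
    rw [ih fun n hn => h n (by omega), h l (by omega), prod_range_succ, mul_assoc]

section Cycles

variable {V α : Type*} [CommMonoid α]

def cycleGain (g : V → V → α) {m : ℕ} [NeZero m] (c : ZMod m → V) : α :=
  ∏ k, g (c k) (c (k + 1))

lemma cycleGain_eq_prod_range (g : V → V → α) {m : ℕ} [NeZero m]
    (c : ZMod m → V) (k : ZMod m) :
    cycleGain g c = ∏ n ∈ range m, g (c (k + n)) (c (k + (n + 1 : ℕ))) := by
  rw [cycleGain, ← Equiv.prod_comp (Equiv.addLeft k), ZMod.prod_univ_eq_prod_range]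
  simp [add_assoc]

def closePath (p : ℕ → V) (l : ℕ) : ZMod (l + 1) → V := fun t => p t.val

section closePath

variable {p : ℕ → V} {l n : ℕ}

lemma closePath_natCast (hn : n ≤ l) : closePath p l n = p n := by
  rw [closePath, ZMod.val_cast_of_lt (Nat.lt_succ_of_le hn)]

lemma closePath_natCast_add_one (hn : n < l) : closePath p l (n + 1) = p (n + 1) := by
  exact_mod_cast closePath_natCast (p := p) hn

lemma closePath_natCast_last : closePath p l (l + 1) = p 0 := by
  rw [← Nat.cast_succ, ZMod.natCast_self]
  rfl

lemma isCycle_closePath {G : SimpleGraph V} (hl : 2 ≤ l) (hinj : Set.InjOn p {i | i ≤ l})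
    (hadj : ∀ n < l, G.Adj (p n) (p (n + 1))) (hclose : G.Adj (p l) (p 0)) :
    IsCycle G (closePath p l) := by
  refine ⟨by omega, fun a b h => ZMod.val_injective _ ?_, fun t => ?_⟩
  · exact hinj (Nat.lt_succ_iff.1 a.val_lt) (Nat.lt_succ_iff.1 b.val_lt) h
  obtain ⟨n, hn, rfl⟩ : ∃ n ≤ l, (n : ZMod (l + 1)) = t :=
    ⟨t.val, Nat.lt_succ_iff.1 t.val_lt, ZMod.natCast_zmod_val t⟩
  rcases hn.lt_or_eq with hn | rfl
  · rw [closePath_natCast hn.le, closePath_natCast_add_one hn]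
    exact hadj n hn
  · rw [closePath_natCast le_rfl, closePath_natCast_last]
    exact hclose

lemma cycleGain_closePath (g : V → V → α) (p : ℕ → V) (l : ℕ) :
    cycleGain g (closePath p l) = (∏ n ∈ range l, g (p n) (p (n + 1))) * g (p l) (p 0) := by
  rw [cycleGain, ZMod.prod_univ_eq_prod_range, prod_range_succ, closePath_natCast le_rfl,
    closePath_natCast_last]
  congr 1
  refine prod_congr rfl fun n hn => ?_
  rw [closePath_natCast (mem_range.1 hn).le, closePath_natCast_add_one (mem_range.1 hn)]

end closePath
lemma ZMod.val_sub_mem_Icc {m : ℕ} [NeZero m] {k k' : ZMod m} (hne : k ≠ k')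
    (hne₁ : k' ≠ k + 1) (hne₂ : k ≠ k' + 1) : (k' - k).val ∈ Set.Icc 2 (m - 2) := by
  have hjk : ((k' - k).val : ZMod m) = k' - k := ZMod.natCast_zmod_val _
  have hlt : (k' - k).val < m := ZMod.val_lt _
  constructor
  · by_contra! h
    interval_cases hj : (k' - k).val
    · exact hne (sub_eq_zero.1 (by rw [← hjk]; simp)).symm
    · exact hne₁ (by linear_combination (norm := ring_nf) -hjk)
  · by_contra! h
    have hm : (((k' - k).val + 1 : ℕ) : ZMod m) = 0 := by
      rw [show (k' - k).val + 1 = m by omega, ZMod.natCast_self]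
    push_cast at hm
    exact hne₂ (by linear_combination hjk - hm)

variable {G : SimpleGraph V} {g : V → V → α}

lemma exists_shorter_cycles_of_not_chordless (hinv : ∀ a b, G.Adj a b → g a b * g b a = 1)
    {m : ℕ} [NeZero m] {c : ZMod m → V} (hc : IsCycle G c) (hch : ¬ Chordless G c) :
    ∃ (l₁ l₂ : ℕ) (c₁ : ZMod (l₁ + 1) → V) (c₂ : ZMod (l₂ + 1) → V),
      l₁ + 1 < m ∧ l₂ + 1 < m ∧ IsCycle G c₁ ∧ IsCycle G c₂ ∧
      cycleGain g c = cycleGain g c₁ * cycleGain g c₂ := by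
  obtain ⟨-, hinj, hadj⟩ := hc
  simp only [Chordless, not_forall, not_not] at hch
  obtain ⟨k, k', hne, hne₁, hne₂, hchord⟩ := hch
  -- `x` runs around `c` from `c k`; the chord joins `x 0 = x m` to `x j`, and the two new cycles
  -- are the arcs `x 0, …, x j` and `x j, …, x m` closed up by it.
  set x : ℕ → V := fun n => c (k + n)
  set j := (k' - k).val
  obtain ⟨hj2, hjm⟩ := ZMod.val_sub_mem_Icc hne hne₁ hne₂
  have hx0 : x 0 = c k := by simp [x]
  have hxj : x j = c k' := by simp [x, j]
  have hxm : x m = c k := by simp [x]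
  have hx_adj : ∀ n, G.Adj (x n) (x (n + 1)) := fun n => by
    simpa [x, add_assoc] using hadj (k + n)
  have hx_modEq : ∀ a b, x a = x b → a ≡ b [MOD m] := fun a b h =>
    (ZMod.natCast_eq_natCast_iff a b m).1 (add_left_cancel (hinj h))
  refine ⟨j, m - j, closePath x j, closePath (fun n => x (j + n)) (m - j), by omega, by omega,
    isCycle_closePath hj2 (fun a ha b hb h => ?_) (fun n _ => hx_adj n) ?_,
    isCycle_closePath (by omega) (fun a ha b hb h => ?_) (fun n _ => hx_adj (j + n)) ?_, ?_⟩
  · simp only [Set.mem_ofPred_eq] at ha hb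
    exact (hx_modEq a b h).eq_of_lt_of_lt (by omega) (by omega)
  · rw [hxj, hx0]
    exact hchord.symm
  · simp only [Set.mem_ofPred_eq] at ha hb
    exact (Nat.ModEq.add_left_cancel' j (hx_modEq _ _ h)).eq_of_abs_lt
      (abs_sub_lt_iff.2 ⟨by omega, by omega⟩)
  · rw [Nat.add_sub_cancel' (by omega), hxm, add_zero, hxj]
    exact hchord
  · rw [cycleGain_closePath, cycleGain_closePath, cycleGain_eq_prod_range g c k]
    change ∏ n ∈ range m, g (x n) (x (n + 1)) = _
    conv_lhs => rw [← Nat.add_sub_cancel' (show j ≤ m by omega)]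
    rw [prod_range_add, Nat.add_sub_cancel' (by omega), hxm, add_zero, hx0, hxj,
      mul_mul_mul_comm, hinv _ _ hchord.symm, mul_one]
    simp only [add_assoc]

theorem cycleGain_eq_one_of_chordless (hinv : ∀ a b, G.Adj a b → g a b * g b a = 1)
    (hch : ∀ (m : ℕ) [NeZero m] (c : ZMod m → V), IsCycle G c → Chordless G c →
      cycleGain g c = 1) :
    ∀ (m : ℕ) [NeZero m] (c : ZMod m → V), IsCycle G c → cycleGain g c = 1 := by
  intro m
  induction m using Nat.strong_induction_on with
  | _ m ih =>
  intro _ c hc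
  by_cases hcl : Chordless G c
  · exact hch m c hc hcl
  obtain ⟨l₁, l₂, c₁, c₂, h₁, h₂, hc₁, hc₂, hgain⟩ :=
    exists_shorter_cycles_of_not_chordless hinv hc hcl
  rw [hgain, ih _ h₁ c₁ hc₁, ih _ h₂ c₂ hc₂, one_mul]

end Cycles

section Potential

variable {V α : Type*} [CommGroupWithZero α] {G H : SimpleGraph V} {g : V → V → α}
  {f : V → α} {u v : V}

lemma eq_gain_mul_of_reachable (hinv : ∀ a b, G.Adj a b → g a b * g b a = 1)
    (hcyc : ∀ (m : ℕ) [NeZero m] (c : ZMod m → V), IsCycle G c → cycleGain g c = 1)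
    (hHG : H ≤ G) (hf : ∀ a b, H.Adj a b → f a = g a b * f b) (huv : G.Adj u v)
    (hHuv : ¬ H.Adj u v) (hreach : H.Reachable u v) : f u = g u v * f v := by
  classical
  obtain ⟨q⟩ := hreach
  set p := q.bypass
  have hl : 2 ≤ p.length := by
    by_contra! h
    interval_cases hl : p.length
    · exact huv.ne (p.eq_of_length_eq_zero hl)
    · exact hHuv (p.adj_of_length_eq_one hl)
  have hcycle : IsCycle G (closePath p.getVert p.length) :=
    isCycle_closePath hl q.bypass_isPath.getVert_injOn
      (fun n hn => hHG (p.adj_getVert_succ hn)) (by simpa using huv.symm)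
  have hclosed := hcyc _ _ hcycle
  rw [cycleGain_closePath, p.getVert_length, p.getVert_zero] at hclosed
  have htel : f (p.getVert 0) = (∏ n ∈ range p.length, g (p.getVert n) (p.getVert (n + 1))) *
      f (p.getVert p.length) :=
    eq_prod_range_mul_of_forall_lt (x := fun n => f (p.getVert n))
      fun n hn => hf _ _ (p.adj_getVert_succ hn)
  have hvu : g v u ≠ 0 := right_ne_zero_of_mul_eq_one (hinv u v huv)
  rw [p.getVert_zero, p.getVert_length] at htel
  rw [htel, mul_right_cancel₀ hvu (hclosed.trans (hinv u v huv).symm)]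

lemma exists_potential_of_not_reachable (hf0 : ∀ w, f w ≠ 0)
    (hf : ∀ a b, H.Adj a b → f a = g a b * f b) (hg : g u v ≠ 0) (hreach : ¬ H.Reachable u v) :
    ∃ f' : V → α, (∀ w, f' w ≠ 0) ∧ f' u = g u v * f' v ∧
      ∀ a b, H.Adj a b → f' a = g a b * f' b := by
  classical
  set C := f u / (g u v * f v)
  have hC : C ≠ 0 := div_ne_zero (hf0 u) (mul_ne_zero hg (hf0 v))
  refine ⟨fun w => if H.Reachable w v then C * f w else f w, fun w => ?_, ?_, fun a b hab => ?_⟩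
  · dsimp only
    split_ifs
    exacts [mul_ne_zero hC (hf0 w), hf0 w]
  · simp only [hreach, if_false, SimpleGraph.Reachable.refl, if_true, C]
    field_simp [hf0 v, hg]
  · have hiff : H.Reachable a v ↔ H.Reachable b v :=
      ⟨hab.symm.reachable.trans, hab.reachable.trans⟩
    by_cases ha : H.Reachable a v
    · simp only [ha, hiff.1 ha, if_true, hf a b hab]
      exact mul_left_comm _ _ _
    · simp only [ha, (not_congr hiff).1 ha, if_false, hf a b hab]

lemma exists_potential_of_new_edge (hinv : ∀ a b, G.Adj a b → g a b * g b a = 1)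
    (hcyc : ∀ (m : ℕ) [NeZero m] (c : ZMod m → V), IsCycle G c → cycleGain g c = 1)
    (hHG : H ≤ G) (hf0 : ∀ w, f w ≠ 0) (hf : ∀ a b, H.Adj a b → f a = g a b * f b)
    (huv : G.Adj u v) (hHuv : ¬ H.Adj u v) :
    ∃ f' : V → α, (∀ w, f' w ≠ 0) ∧ f' u = g u v * f' v ∧
      ∀ a b, H.Adj a b → f' a = g a b * f' b := by
  by_cases hreach : H.Reachable u v
  · exact ⟨f, hf0, eq_gain_mul_of_reachable hinv hcyc hHG hf huv hHuv hreach, hf⟩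
  · exact exists_potential_of_not_reachable hf0 hf
      (left_ne_zero_of_mul_eq_one (hinv u v huv)) hreach

theorem exists_potential_of_cycleGain_eq_one [Finite V]
    (hinv : ∀ a b, G.Adj a b → g a b * g b a = 1)
    (hcyc : ∀ (m : ℕ) [NeZero m] (c : ZMod m → V), IsCycle G c → cycleGain g c = 1) :
    ∃ f : V → α, (∀ v, f v ≠ 0) ∧ ∀ a b, G.Adj a b → f a = g a b * f b := by
  classical
  suffices h : ∀ t : Finset (Sym2 V), ↑t ⊆ G.edgeSet →
      ∃ f : V → α, (∀ v, f v ≠ 0) ∧ ∀ a b, s(a, b) ∈ t → f a = g a b * f b by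
    obtain ⟨f, hf0, hf⟩ := h G.edgeSet.toFinite.toFinset (by simp)
    exact ⟨f, hf0, fun a b hab => hf a b (by simpa using hab)⟩
  intro t
  induction t using Finset.induction_on with
  | empty => exact fun _ => ⟨1, fun _ => one_ne_zero, by simp⟩
  | insert e t he ih =>
  intro ht
  rw [coe_insert, Set.insert_subset_iff] at ht
  obtain ⟨f, hf0, hf⟩ := ih ht.2
  induction e using Sym2.ind with
  | _ u v =>
  have huv : G.Adj u v := ht.1
  have hH {a b : V} : (SimpleGraph.fromEdgeSet ↑t).Adj a b ↔ s(a, b) ∈ t := by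
    rw [SimpleGraph.fromEdgeSet_adj]
    exact ⟨And.left, fun h => ⟨h, (ht.2 h : G.Adj a b).ne⟩⟩
  obtain ⟨f', hf'0, hnew, hold⟩ := exists_potential_of_new_edge hinv hcyc
    (fun a b hab => ht.2 (hH.1 hab)) hf0 (fun a b hab => hf a b (hH.1 hab)) huv
    (fun h => he (hH.1 h))
  refine ⟨f', hf'0, fun a b hab => ?_⟩
  rcases mem_insert.1 hab with h | h
  · rcases Sym2.eq_iff.1 h with ⟨rfl, rfl⟩ | ⟨rfl, rfl⟩
    · exact hnew
    · rw [hnew, ← mul_assoc, hinv _ _ huv.symm, one_mul]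
  · exact hold a b (hH.2 h)

end Potential

lemma even_of_isCycle {V : Type*} {G : SimpleGraph V} {P : V → Prop}
    (hbip : ∀ i j, G.Adj i j → (P i ↔ ¬ P j)) {m : ℕ} {c : ZMod m → V} (hc : IsCycle G c) :
    Even m := by
  have hparity : ∀ n : ℕ, P (c n) ↔ (P (c 0) ↔ Even n) := by
    intro n
    induction n with
    | zero => simp
    | succ n ih =>
      have := hbip _ _ (hc.2.2 n)
      push_cast
      rw [Nat.even_add_one]
      tauto
  have := hparity m
  rw [ZMod.natCast_self] at this
  tauto

-- `S = diag f * (i A) * (diag f)⁻¹` says `S a b = f a * i * (f b)⁻¹` on edges, i.e.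
-- `f a = skewGain S a b * f b`.
def skewGain {V : Type*} (S : Matrix V V ℝ) (a b : V) : ℂ := -Complex.I * S a b

section SkewAdjacency

variable {V : Type*} [Fintype V] [DecidableEq V] {G : SimpleGraph V} {S : Matrix V V ℝ}

lemma IsSkewAdj.skewGain_mul_skewGain (hS : IsSkewAdj G S) {a b : V} (h : G.Adj a b) :
    skewGain S a b * skewGain S b a = 1 := by
  have hba : S b a = -S a b := by simpa using congrFun (congrFun hS.2.2 a) b
  rcases hS.1 a b h with h | h <;> simp [skewGain, hba, h]

lemma IsSkewAdj.prod_eq_neg_one_pow {m : ℕ} [NeZero m] (hS : IsSkewAdj G S) {c : ZMod m → V}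
    (hc : IsCycle G c) :
    ∏ k, S (c k) (c (k + 1)) = (-1) ^ (m - clockwiseArcs S c) := by
  set p : ZMod m → Prop := fun k => S (c k) (c (k + 1)) = 1
  have hcount : #(univ.filter fun k => ¬ p k) = m - clockwiseArcs S c := by
    have := card_filter_add_card_filter_not (s := (univ : Finset (ZMod m))) p
    rw [card_univ, ZMod.card] at this
    have hcw : clockwiseArcs S c = #(univ.filter p) := rfl
    omega
  calc ∏ k, S (c k) (c (k + 1))
      = (∏ k ∈ univ.filter p, S (c k) (c (k + 1))) *
          ∏ k ∈ univ.filter (fun k => ¬ p k), S (c k) (c (k + 1)) :=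
        (prod_filter_mul_prod_filter_not _ _ _).symm
    _ = 1 * ∏ k ∈ univ.filter (fun k => ¬ p k), (-1 : ℝ) := by
        rw [prod_eq_one fun k hk => (mem_filter.1 hk).2]
        exact congrArg _ (prod_congr rfl fun k hk =>
          (hS.1 _ _ (hc.2.2 k)).resolve_left (mem_filter.1 hk).2)
    _ = (-1) ^ (m - clockwiseArcs S c) := by rw [one_mul, prod_const, hcount]

lemma uniformCycle_iff_cycleGain_eq_one {m : ℕ} [NeZero m] (hS : IsSkewAdj G S)
    {c : ZMod m → V} (hc : IsCycle G c) (hm : Even m) :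
    UniformCycle S c ↔ cycleGain (skewGain S) c = 1 := by
  obtain ⟨ℓ, hℓ⟩ := hm
  have harcs : clockwiseArcs S c ≤ m := by
    simpa [clockwiseArcs] using card_filter_le (univ : Finset (ZMod m)) _
  have hgain : cycleGain (skewGain S) c = (-1) ^ (ℓ + (m - clockwiseArcs S c)) := by
    rw [cycleGain]
    simp only [skewGain]
    have hI : (-Complex.I) ^ m = (-1) ^ ℓ := by
      rw [hℓ, ← two_mul, pow_mul]
      norm_num
    rw [prod_mul_distrib, prod_const, card_univ, ZMod.card, ← Complex.ofReal_prod,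
      hS.prod_eq_neg_one_pow hc, hI, pow_add]
    push_cast
    rfl
  rw [hgain, neg_one_pow_eq_one_iff_even (by norm_num), UniformCycle, Nat.ModEq, Nat.even_iff]
  omega

end SkewAdjacency

namespace Matrix

open Polynomial

variable {n K : Type*} [Fintype n] [DecidableEq n] [Field K]

lemma charpoly_diagonal_mul_mul_diagonal_inv {f : n → K} (hf : ∀ i, f i ≠ 0)
    (M : Matrix n n K) : (diagonal f * M * diagonal f⁻¹).charpoly = M.charpoly := by
  rw [charpoly_mul_comm, ← mul_assoc, diagonal_mul_diagonal]
  simp [hf]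

lemma charpoly_smul (A : Matrix n n K) {r : K} (hr : r ≠ 0) :
    (r • A).charpoly = C (r ^ Fintype.card n) * A.charpoly.comp (C r⁻¹ * X) := by
  have hchar :
      charmatrix (r • A) = C r • (compRingHom (C r⁻¹ * X)).mapMatrix (charmatrix A) := by
    ext i j
    by_cases h : i = j
    · subst h
      simp only [charmatrix_apply_eq, smul_apply, smul_eq_mul, RingHom.mapMatrix_apply, map_apply,
        coe_compRingHom_apply, sub_comp, X_comp, C_comp]
      rw [mul_sub, ← mul_assoc, ← C_mul, mul_inv_cancel₀ hr, C_1, one_mul, C_mul]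
    · simp [charmatrix_apply_ne _ _ _ h]
  rw [charpoly, hchar, det_smul, ← RingHom.map_det, ← C_pow]
  rfl

lemma roots_charpoly_smul_s7 (A : Matrix n n K) {r : K} (hr : r ≠ 0) :
    (r • A).charpoly.roots = A.charpoly.roots.map (r * ·) := by
  have hlin : C r⁻¹ * X = C r⁻¹ * X + C 0 := by simp
  rw [charpoly_smul A hr, roots_C_mul _ (pow_ne_zero _ hr), hlin,
    roots_comp_C_mul_X_add_C _ _ _ (isUnit_iff_ne_zero.2 (inv_ne_zero hr))]
  simp

end Matrix

lemma IsSkewAdj.map_ofReal_eq_conj {V : Type*} [Fintype V] [DecidableEq V] {G : SimpleGraph V}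
    [DecidableRel G.Adj] {S : Matrix V V ℝ} (hS : IsSkewAdj G S) {f : V → ℂ}
    (hf0 : ∀ v, f v ≠ 0) (hf : ∀ a b, G.Adj a b → f a = skewGain S a b * f b) :
    S.map Complex.ofReal =
      diagonal f * (Complex.I • (G.adjMatrix ℝ).map Complex.ofReal) * diagonal f⁻¹ := by
  ext a b
  rw [mul_diagonal, diagonal_mul, Matrix.smul_apply, map_apply, map_apply,
    SimpleGraph.adjMatrix_apply]
  by_cases h : G.Adj a b
  · rw [if_pos h, hf a b h, skewGain, Pi.inv_apply, Complex.ofReal_one, smul_eq_mul, mul_one,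
      mul_right_comm _ (f b), mul_inv_cancel_right₀ (hf0 b), mul_right_comm, neg_mul,
      Complex.I_mul_I]
    ring
  · simp [h, hS.2.1 a b h]

/-- If every chordless cycle of a bipartite graph is oriented uniformly, then every
cycle is oriented uniformly, and consequently `Sp_S(G^σ) = i·Sp(G)`. -/
theorem chordless_uniform_implies_all_uniform
    {V : Type*} [Fintype V] [DecidableEq V]
    (G : SimpleGraph V) (X : Finset V)
    (hbip : ∀ i j, G.Adj i j → (i ∈ X ↔ j ∉ X))
    (S : Matrix V V ℝ) (hS : IsSkewAdj G S)
    (hchordless : ∀ (m : ℕ) [NeZero m] (c : ZMod m → V),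
      IsCycle G c → Chordless G c → UniformCycle S c) :
    (∀ (m : ℕ) [NeZero m] (c : ZMod m → V), IsCycle G c → UniformCycle S c) ∧
    cSpec S = (adjSpec G).map (fun z => Complex.I * z) := by
  have hinv : ∀ a b, G.Adj a b → skewGain S a b * skewGain S b a = 1 :=
    fun _ _ h => hS.skewGain_mul_skewGain h
  have huniform {m : ℕ} [NeZero m] {c : ZMod m → V} (hc : IsCycle G c) :
      UniformCycle S c ↔ cycleGain (skewGain S) c = 1 :=
    uniformCycle_iff_cycleGain_eq_one hS hc (even_of_isCycle (P := (· ∈ X)) hbip hc)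
  have hall : ∀ (m : ℕ) [NeZero m] (c : ZMod m → V), IsCycle G c →
      cycleGain (skewGain S) c = 1 :=
    cycleGain_eq_one_of_chordless hinv fun m _ c hc hcl =>
      (huniform hc).1 (hchordless m c hc hcl)
  refine ⟨fun m _ c hc => (huniform hc).2 (hall m c hc), ?_⟩
  classical
  obtain ⟨f, hf0, hf⟩ := exists_potential_of_cycleGain_eq_one hinv hall
  rw [cSpec, hS.map_ofReal_eq_conj hf0 hf, Matrix.charpoly_diagonal_mul_mul_diagonal_inv hf0,
    Matrix.roots_charpoly_smul_s7 _ Complex.I_ne_zero]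
  rfl
end

section
/- Let H^τ be an oriented bipartite graph on m vertices with bipartition sizes m_1, m_2, so that S(H^τ) = [[0, B],[−B^T, 0]] in block form, and let G^σ be an oriented graph on n vertices. Let I' be the diagonal m×m matrix with first m_1 diagonal entries 1 and last m_2 entries −1. Let S = I' ⊗ S(G^σ) + S(H^τ) ⊗ I_n. Then S S^T = −(I_m ⊗ S(G^σ)² + S(H^τ)² ⊗ I_n). -/
/-!
Both summands of `S = I' ⊗ Sg + Sh ⊗ 1` are skew-symmetric, so `S Sᵀ = -S²`, and expanding the
square gives `I'² ⊗ Sg² + Sh² ⊗ 1` plus the cross term `(I' Sh + Sh I') ⊗ Sg`. The sign matrix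
`I'` is an involution that anticommutes with every block-off-diagonal matrix such as `Sh`, so
`I'² = 1` and the cross term vanishes.
-/

open Matrix Kronecker

namespace Matrix

variable {l m n p α : Type*}

theorem neg_kronecker [Mul α] [HasDistribNeg α] (A : Matrix l m α) (B : Matrix n p α) :
    (-A) ⊗ₖ B = -(A ⊗ₖ B) := by
  ext ⟨i, j⟩ ⟨k, l⟩
  simp

theorem kronecker_neg [Mul α] [HasDistribNeg α] (A : Matrix l m α) (B : Matrix n p α) :
    A ⊗ₖ (-B) = -(A ⊗ₖ B) := by
  ext ⟨i, j⟩ ⟨k, l⟩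
  simp

theorem transpose_kronecker_add_kronecker_one [DecidableEq n] [CommRing α]
    {E A : Matrix m m α} {C : Matrix n n α} (hE : Eᵀ = E) (hC : Cᵀ = -C) (hA : Aᵀ = -A) :
    (E ⊗ₖ C + A ⊗ₖ (1 : Matrix n n α))ᵀ = -(E ⊗ₖ C + A ⊗ₖ (1 : Matrix n n α)) := by
  rw [transpose_add, ← kroneckerMap_transpose, ← kroneckerMap_transpose, hE, hC, hA,
    transpose_one, kronecker_neg, neg_kronecker, neg_add]

section Anticommuting

variable [Fintype m] [Fintype n] [DecidableEq m] [DecidableEq n] [CommRing α]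
  {E A : Matrix m m α} {C : Matrix n n α}

theorem kronecker_add_kronecker_one_mul_self (hE : E * E = 1) (hEA : E * A = -(A * E)) :
    (E ⊗ₖ C + A ⊗ₖ (1 : Matrix n n α)) * (E ⊗ₖ C + A ⊗ₖ (1 : Matrix n n α)) =
      (1 : Matrix m m α) ⊗ₖ (C * C) + (A * A) ⊗ₖ (1 : Matrix n n α) := by
  have hcross : (E * A) ⊗ₖ C + (A * E) ⊗ₖ C = 0 := by
    rw [← add_kronecker, hEA, neg_add_cancel, zero_kronecker]
  simp only [add_mul, mul_add, ← mul_kronecker_mul, hE, Matrix.mul_one, Matrix.one_mul]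
  calc _ = (1 : Matrix m m α) ⊗ₖ (C * C) + ((E * A) ⊗ₖ C + (A * E) ⊗ₖ C) +
        (A * A) ⊗ₖ (1 : Matrix n n α) := by abel
    _ = _ := by rw [hcross, add_zero]

end Anticommuting

variable [Fintype m] [Fintype n] [DecidableEq m] [DecidableEq n] [Ring α]

theorem fromBlocks_one_neg_one_mul_self :
    fromBlocks (1 : Matrix m m α) 0 0 (-1 : Matrix n n α) *
      fromBlocks (1 : Matrix m m α) 0 0 (-1 : Matrix n n α) = 1 := by
  simp [fromBlocks_multiply, fromBlocks_one]

theorem fromBlocks_one_neg_one_mul_fromBlocks_zero_zero (B : Matrix m n α) (C : Matrix n m α) :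
    fromBlocks (1 : Matrix m m α) 0 0 (-1 : Matrix n n α) * fromBlocks 0 B C 0 =
      -(fromBlocks 0 B C 0 * fromBlocks (1 : Matrix m m α) 0 0 (-1 : Matrix n n α)) := by
  simp [fromBlocks_multiply, fromBlocks_neg]

end Matrix

/-- For a bipartite skew-adjacency matrix `Sh = [[0, B], [-Bᵀ, 0]]`, a skew-symmetric
matrix `Sg`, and `I' = diag(I, -I)`, the matrix `S = I' ⊗ Sg + Sh ⊗ I` satisfies
`S Sᵀ = -(I ⊗ Sg² + Sh² ⊗ I)`. -/
theorem product_orientation_SSt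
    (m₁ m₂ n : ℕ)
    (B : Matrix (Fin m₁) (Fin m₂) ℝ)
    (Sg : Matrix (Fin n) (Fin n) ℝ) (hSg : Sgᵀ = -Sg) :
    let Sh : Matrix (Fin m₁ ⊕ Fin m₂) (Fin m₁ ⊕ Fin m₂) ℝ :=
      Matrix.fromBlocks 0 B (-Bᵀ) 0
    let I' : Matrix (Fin m₁ ⊕ Fin m₂) (Fin m₁ ⊕ Fin m₂) ℝ :=
      Matrix.fromBlocks 1 0 0 (-1)
    let S := I' ⊗ₖ Sg + Sh ⊗ₖ (1 : Matrix (Fin n) (Fin n) ℝ)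
    S * Sᵀ =
      -((1 : Matrix (Fin m₁ ⊕ Fin m₂) (Fin m₁ ⊕ Fin m₂) ℝ) ⊗ₖ (Sg * Sg) +
        (Sh * Sh) ⊗ₖ (1 : Matrix (Fin n) (Fin n) ℝ)) := by
  intro Sh I' S
  have hI' : I'ᵀ = I' := by simp [I', fromBlocks_transpose]
  have hSh : Shᵀ = -Sh := by simp [Sh, fromBlocks_transpose, fromBlocks_neg]
  rw [transpose_kronecker_add_kronecker_one hI' hSg hSh, Matrix.mul_neg,
    kronecker_add_kronecker_one_mul_self fromBlocks_one_neg_one_mul_self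
      (fromBlocks_one_neg_one_mul_fromBlocks_zero_zero B (-Bᵀ))]
end

section
/- Let H^τ be an oriented bipartite graph of order m whose nonzero skew eigenvalues are ±iμ_1,…,±iμ_t (and m−2t zeros), and G^σ an oriented graph of order n whose nonzero skew eigenvalues are ±iλ_1,…,±iλ_r (and n−2r zeros). Then the modified Cartesian product orientation (H^τ □ G^σ)^o has skew eigenvalues ±i√(μ_j² + λ_k²) each with multiplicity 2 (for 1≤j≤t, 1≤k≤r), ±iμ_j with multiplicity n−2r, ±iλ_k with multiplicity m−2t, and 0 with multiplicity (m−2t)(n−2r). -/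
/-!
The matrix `I'` squares to the identity and anticommutes with `S(H)`, so the square of
`S = I' ⊗ S(G) + S(H) ⊗ I` is the Kronecker sum `S(H)² ⊗ I + I ⊗ S(G)²` of two real symmetric
matrices; its eigenvalues are the pairwise sums of those of `S(H)²` (namely `-μ_j²`, twice each,
and zeros) and of `S(G)²`. For a skew-symmetric `M` we have
`χ_M(x)² = χ_M(x) χ_{-M}(x) = χ_{M²}(x²)`, so a spectrum of `M` that is symmetric under negation
is determined by the spectrum of `M²`. This recovers the eigenvalues `±i√(μ_j² + λ_k²)`, `±iμ_j`,
`±iλ_k`, `0` of `S` from those of `S²`.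
-/

open Matrix Kronecker

open Polynomial Complex

theorem Multiset.bind_replicate {α β : Type*} (s : Multiset α) (k : ℕ) (g : α → β) :
    (s.bind fun x => replicate k (g x)) = k • s.map g := by
  induction s using Multiset.induction_on with
  | empty => simp
  | cons a s ih =>
    rw [Multiset.cons_bind, ih, Multiset.map_cons, ← Multiset.singleton_add, nsmul_add,
      Multiset.nsmul_singleton]

theorem Multiset.bind_map_add_nsmul_add_replicate_zero {M : Type*} [AddCommMonoid M]
    (A B : Multiset M) (k zA zB : ℕ) :
    (k • A + replicate zA 0).bind (fun x => (k • B + replicate zB 0).map (x + ·)) =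
      k • k • A.bind (fun x => B.map (x + ·)) + (k * zB) • A + (k * zA) • B +
        replicate (zA * zB) 0 := by
  simp only [Multiset.bind, Multiset.join, ← Multiset.nsmul_singleton, Multiset.map_add,
    Multiset.map_nsmul, Multiset.sum_add, Multiset.sum_nsmul, Multiset.sum_map_add,
    Multiset.sum_map_nsmul, Multiset.map_singleton, Multiset.sum_singleton,
    Multiset.sum_map_singleton, add_zero, zero_add, Multiset.map_id']
  module

theorem Finset.univ_val_map_prod {α β γ : Type*} [Fintype α] [Fintype β] (g : α × β → γ) :
    (Finset.univ : Finset (α × β)).val.map g =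
      Finset.univ.val.bind fun a => Finset.univ.val.map fun b => g (a, b) := by
  rw [← Finset.univ_product_univ, Finset.product_val]
  simp [SProd.sprod, Multiset.product, Multiset.map_bind]

section Charpoly

variable {n : Type*} [Fintype n] [DecidableEq n] {R : Type*} [CommRing R]

theorem Matrix.expand_charpoly_mul_self (M : Matrix n n R) :
    expand R 2 (M * M).charpoly = M.charpoly * (-M).charpoly := by
  have hX : Commute (scalar n (X : R[X])) (C.mapMatrix M) :=
    scalar_commute _ (fun r => Commute.all _ r) _
  have hprod : charmatrix M * charmatrix (-M) = scalar n (X ^ 2) - C.mapMatrix (M * M) := by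
    rw [charmatrix, charmatrix, map_neg, sub_neg_eq_add, sub_mul, mul_add, mul_add, hX.eq,
      map_mul, sq, map_mul]
    abel
  have hexpand : (expand R 2).mapMatrix (charmatrix (M * M)) =
      scalar n (X ^ 2) - C.mapMatrix (M * M) := by
    refine Matrix.ext fun i j => ?_
    by_cases h : i = j <;> simp [h, mul_apply]
  rw [charpoly, charpoly, charpoly, ← det_mul, hprod, ← hexpand, ← AlgHom.coe_toRingHom,
    RingHom.map_det]
  rfl

theorem Polynomial.expand_prod_X_sub_C_sq (s : Multiset R) :
    expand R 2 ((s.map (· ^ 2)).map fun a => X - C a).prod =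
      (s.map fun a => X - C a).prod * ((s.map Neg.neg).map fun a => X - C a).prod := by
  simp only [map_multiset_prod, Multiset.map_map, ← Multiset.prod_map_mul]
  refine congrArg _ (Multiset.map_congr rfl fun a _ => ?_)
  simp only [Function.comp_apply, map_sub, expand_X, expand_C, map_neg, sub_neg_eq_add, map_pow]
  ring

theorem Polynomial.Monic.eq_of_mul_self_eq [IsDomain R] {p q : R[X]} (hp : p.Monic)
    (hq : q.Monic) (h : p * p = q * q) : p = q := by
  obtain h | h := mul_self_eq_mul_self_iff.mp h
  · exact h
  · have hneg : (-1 : R) = 1 := by simpa [h, Monic, hq.leadingCoeff] using hp.leadingCoeff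
    rw [h, ← neg_one_mul, ← C_1, ← C_neg, hneg, C_1, one_mul]

variable {K : Type*} [Field K] [IsAlgClosed K]

theorem Polynomial.Monic.roots_eq_iff {p : K[X]} (hp : p.Monic) {s : Multiset K} :
    p.roots = s ↔ p = (s.map fun a => X - C a).prod :=
  ⟨fun h => h ▸ (IsAlgClosed.splits p).eq_prod_roots_of_monic hp,
    fun h => h ▸ roots_multiset_prod_X_sub_C s⟩

theorem Matrix.roots_charpoly_eq_iff_of_transpose_eq_neg {M : Matrix n n K} (hM : Mᵀ = -M)
    {s : Multiset K} (hs : s.map Neg.neg = s) :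
    M.charpoly.roots = s ↔ (M * M).charpoly.roots = s.map (· ^ 2) := by
  have hsq : M.charpoly * M.charpoly = expand K 2 (M * M).charpoly := by
    rw [expand_charpoly_mul_self, ← hM, charpoly_transpose]
  have hs_sq : expand K 2 ((s.map (· ^ 2)).map fun a => X - C a).prod =
      (s.map fun a => X - C a).prod * (s.map fun a => X - C a).prod := by
    rw [expand_prod_X_sub_C_sq, hs]
  rw [(charpoly_monic _).roots_eq_iff, (charpoly_monic _).roots_eq_iff]
  constructor
  · intro h
    exact expand_injective two_pos (by rw [← hsq, hs_sq, h])
  · intro h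
    refine (charpoly_monic M).eq_of_mul_self_eq
      (monic_multiset_prod_of_monic _ _ fun a _ => monic_X_sub_C a) ?_
    rw [hsq, h, hs_sq]

end Charpoly

section Kronecker

variable {m n : Type*} [DecidableEq n] {R : Type*} [CommRing R]

theorem Matrix.transpose_kronecker_add_kronecker_one_s11 {E A : Matrix m m R} {B : Matrix n n R}
    (hE : Eᵀ = E) (hA : Aᵀ = -A) (hB : Bᵀ = -B) :
    (E ⊗ₖ B + A ⊗ₖ 1)ᵀ = -(E ⊗ₖ B + A ⊗ₖ 1) := by
  rw [transpose_add, ← kroneckerMap_transpose, ← kroneckerMap_transpose, hE, hA, hB,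
    transpose_one, neg_add]
  congr 1 <;> ext <;> simp

variable [DecidableEq m] [Fintype m] [Fintype n]


theorem Matrix.kronecker_add_kronecker_one_mul_self_s11 {E A : Matrix m m R} {B : Matrix n n R}
    (hE : E * E = 1) (hEA : E * A + A * E = 0) :
    (E ⊗ₖ B + A ⊗ₖ 1) * (E ⊗ₖ B + A ⊗ₖ 1) = (A * A) ⊗ₖ 1 + 1 ⊗ₖ (B * B) := by
  simp only [add_mul, mul_add, ← mul_kronecker_mul, hE, mul_one, one_mul]
  calc _ = (A * A) ⊗ₖ 1 + 1 ⊗ₖ (B * B) + (E * A + A * E) ⊗ₖ B := by rw [add_kronecker]; abel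
    _ = _ := by rw [hEA, zero_kronecker, add_zero]

theorem Matrix.fromBlocks_one_neg_one_mul_self_s11 :
    fromBlocks (1 : Matrix m m R) 0 0 (-1 : Matrix n n R) * fromBlocks 1 0 0 (-1) = 1 := by
  simp [fromBlocks_multiply, fromBlocks_one]

theorem Matrix.fromBlocks_one_neg_one_anticomm (B : Matrix m n R) (C : Matrix n m R) :
    fromBlocks 1 0 0 (-1) * fromBlocks 0 B C 0 + fromBlocks 0 B C 0 * fromBlocks 1 0 0 (-1) =
      0 := by
  simp [fromBlocks_multiply, fromBlocks_add]

theorem Matrix.IsHermitian.roots_charpoly_kronecker_one_add_one_kronecker {𝕜 : Type*}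
    [RCLike 𝕜] {A : Matrix m m 𝕜} {B : Matrix n n 𝕜} (hA : A.IsHermitian)
    (hB : B.IsHermitian) :
    (A ⊗ₖ 1 + 1 ⊗ₖ B).charpoly.roots =
      A.charpoly.roots.bind fun a => B.charpoly.roots.map (a + ·) := by
  set U : Matrix m m 𝕜 := (hA.eigenvectorUnitary : Matrix m m 𝕜)
  set W : Matrix n n 𝕜 := (hB.eigenvectorUnitary : Matrix n n 𝕜)
  set a : m → 𝕜 := RCLike.ofReal ∘ hA.eigenvalues
  set b : n → 𝕜 := RCLike.ofReal ∘ hB.eigenvalues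
  have hU : star U * U = 1 := Unitary.star_mul_self_of_mem hA.eigenvectorUnitary.prop
  have hW : star W * W = 1 := Unitary.star_mul_self_of_mem hB.eigenvectorUnitary.prop
  have hU' : U * star U = 1 := Unitary.mul_star_self_of_mem hA.eigenvectorUnitary.prop
  have hW' : W * star W = 1 := Unitary.mul_star_self_of_mem hB.eigenvectorUnitary.prop
  have hdiag : A ⊗ₖ 1 + 1 ⊗ₖ B =
      (U ⊗ₖ W) * diagonal (fun p => a p.1 + b p.2) * (star U ⊗ₖ star W) := by
    have hsplit : diagonal (fun p : m × n => a p.1 + b p.2) =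
        diagonal a ⊗ₖ 1 + 1 ⊗ₖ diagonal b := by
      ext ⟨i, j⟩ ⟨i', j'⟩
      by_cases hi : i = i' <;> by_cases hj : j = j' <;> simp [hi, hj]
    rw [hsplit, mul_add, add_mul, ← mul_kronecker_mul, ← mul_kronecker_mul, ← mul_kronecker_mul,
      ← mul_kronecker_mul, mul_one, mul_one, hW', hU']
    conv_lhs => rw [hA.spectral_theorem, hB.spectral_theorem]
    simp [U, W, a, b]
  rw [hdiag, charpoly_mul_comm, ← mul_assoc, ← mul_kronecker_mul, hU, hW, one_kronecker_one,
    one_mul, charpoly_diagonal,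
    roots_prod _ _ (Finset.prod_ne_zero_iff.mpr fun _ _ => X_sub_C_ne_zero _),
    hA.roots_charpoly_eq_eigenvalues, hB.roots_charpoly_eq_eigenvalues]
  simp only [roots_X_sub_C, Multiset.bind_singleton, Finset.univ_val_map_prod, Multiset.bind_map,
    Multiset.map_map, Function.comp_def, a, b]

end Kronecker

section cSpec

variable {m n : Type*} [Fintype m] [Fintype n] [DecidableEq m] [DecidableEq n]

theorem cSpec_eq_iff_cSpec_mul_self {M : Matrix n n ℝ} (hM : Mᵀ = -M) {s : Multiset ℂ}
    (hs : s.map Neg.neg = s) : cSpec M = s ↔ cSpec (M * M) = s.map (· ^ 2) := by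
  have hMc : (M.map ofReal)ᵀ = -M.map ofReal := by
    rw [← transpose_map, hM, Matrix.map_neg _ ofReal_neg]
  rw [cSpec, cSpec, show (M * M).map ofReal = M.map ofReal * M.map ofReal from
    Matrix.map_mul (f := ofRealHom)]
  exact roots_charpoly_eq_iff_of_transpose_eq_neg hMc hs

theorem Matrix.isHermitian_map_ofReal {k : Type*} {M : Matrix k k ℝ} (hM : Mᵀ = M) :
    (M.map ofReal).IsHermitian :=
  (isHermitian_iff_isSymm.mpr hM).map _ fun x => (conj_ofReal x).symm

theorem cSpec_kronecker_one_add_one_kronecker {A : Matrix m m ℝ} {B : Matrix n n ℝ}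
    (hA : Aᵀ = A) (hB : Bᵀ = B) :
    cSpec (A ⊗ₖ 1 + 1 ⊗ₖ B) = (cSpec A).bind fun a => (cSpec B).map (a + ·) := by
  have hmap : (A ⊗ₖ 1 + 1 ⊗ₖ B).map ofReal = A.map ofReal ⊗ₖ 1 + 1 ⊗ₖ B.map ofReal := by
    ext ⟨i, j⟩ ⟨i', j'⟩
    simp [one_apply, apply_ite ofReal]
  rw [cSpec, hmap]
  exact (isHermitian_map_ofReal hA).roots_charpoly_kronecker_one_add_one_kronecker
    (isHermitian_map_ofReal hB)

end cSpec

def skewSpectrum (w : Multiset ℝ) (z : ℕ) : Multiset ℂ :=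
  w.map (fun x : ℝ => I * x) + w.map (fun x : ℝ => -(I * x)) + Multiset.replicate z 0

theorem skewSpectrum_map_neg (w : Multiset ℝ) (z : ℕ) :
    (skewSpectrum w z).map Neg.neg = skewSpectrum w z := by
  simp only [skewSpectrum, Multiset.map_add, Multiset.map_map, Multiset.map_replicate,
    Function.comp_def, neg_neg, neg_zero]
  abel

theorem skewSpectrum_map_sq (w : Multiset ℝ) (z : ℕ) :
    (skewSpectrum w z).map (· ^ 2) =
      2 • w.map (fun x : ℝ => -(x : ℂ) ^ 2) + Multiset.replicate z 0 := by
  simp [skewSpectrum, Multiset.map_map, mul_pow, two_nsmul]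

/-- The moduli of the nonzero eigenvalues of the product orientation, when `±i a`, `±i b` are
the nonzero eigenvalues of the factors and `zA`, `zB` their nullities. -/
noncomputable def cartesianRadii (a b : Multiset ℝ) (zA zB : ℕ) : Multiset ℝ :=
  2 • (a.bind fun x => b.map fun y => √(x ^ 2 + y ^ 2)) + zB • a + zA • b

theorem skewSpectrum_cartesianRadii_map_sq (a b : Multiset ℝ) (zA zB : ℕ) :
    (skewSpectrum (cartesianRadii a b zA zB) (zA * zB)).map (· ^ 2) =
      ((skewSpectrum a zA).map (· ^ 2)).bind
        fun u => ((skewSpectrum b zB).map (· ^ 2)).map (u + ·) := by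
  have hpyth : (a.bind fun x => b.map fun y => √(x ^ 2 + y ^ 2)).map (fun x : ℝ => -(x : ℂ) ^ 2) =
      (a.map fun x : ℝ => -(x : ℂ) ^ 2).bind
        fun u => (b.map fun x : ℝ => -(x : ℂ) ^ 2).map (u + ·) := by
    simp only [Multiset.map_bind, Multiset.bind_map, Multiset.map_map, Function.comp_def]
    refine Multiset.bind_congr fun x _ => Multiset.map_congr rfl fun y _ => ?_
    rw [← ofReal_pow, Real.sq_sqrt (by positivity)]
    push_cast
    ring
  rw [skewSpectrum_map_sq, skewSpectrum_map_sq, skewSpectrum_map_sq,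
    Multiset.bind_map_add_nsmul_add_replicate_zero, cartesianRadii, Multiset.map_add,
    Multiset.map_add, Multiset.map_nsmul, Multiset.map_nsmul, Multiset.map_nsmul, hpyth]
  module

theorem skewSpectrum_cartesianRadii_univ {t r : ℕ} (μ : Fin t → ℝ) (lam : Fin r → ℝ)
    (zH zG : ℕ) :
    skewSpectrum (cartesianRadii (Finset.univ.val.map μ) (Finset.univ.val.map lam) zH zG)
        (zH * zG) =
      ((Finset.univ : Finset (Fin t × Fin r)).val.bind fun p =>
        Multiset.replicate 2 (I * (√((μ p.1) ^ 2 + (lam p.2) ^ 2) : ℂ)) +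
        Multiset.replicate 2 (-(I * (√((μ p.1) ^ 2 + (lam p.2) ^ 2) : ℂ)))) +
      (Finset.univ.val.bind fun j =>
        Multiset.replicate zG (I * (μ j : ℂ)) + Multiset.replicate zG (-(I * (μ j : ℂ)))) +
      (Finset.univ.val.bind fun k =>
        Multiset.replicate zH (I * (lam k : ℂ)) + Multiset.replicate zH (-(I * (lam k : ℂ)))) +
      Multiset.replicate (zH * zG) 0 := by
  simp only [skewSpectrum, cartesianRadii, Multiset.map_add, Multiset.map_nsmul,
    Multiset.bind_add, Multiset.map_bind, Multiset.bind_map, Multiset.map_map, Function.comp_def,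
    Multiset.bind_replicate, Finset.univ_val_map_prod]
  abel

theorem product_orientation_spectrum_general
    (m₁ m₂ n t r : ℕ)
    (B : Matrix (Fin m₁) (Fin m₂) ℝ)
    (Sg : Matrix (Fin n) (Fin n) ℝ) (hSg : Sgᵀ = -Sg)
    (μ : Fin t → ℝ) (lam : Fin r → ℝ)
    (hSh : cSpec (Matrix.fromBlocks 0 B (-Bᵀ) 0 :
        Matrix (Fin m₁ ⊕ Fin m₂) (Fin m₁ ⊕ Fin m₂) ℝ) =
      (Finset.univ.val.map fun j => Complex.I * (μ j : ℂ)) +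
      (Finset.univ.val.map fun j => -(Complex.I * (μ j : ℂ))) +
      Multiset.replicate (m₁ + m₂ - 2 * t) 0)
    (hSgspec : cSpec Sg =
      (Finset.univ.val.map fun k => Complex.I * (lam k : ℂ)) +
      (Finset.univ.val.map fun k => -(Complex.I * (lam k : ℂ))) +
      Multiset.replicate (n - 2 * r) 0) :
    let Sh : Matrix (Fin m₁ ⊕ Fin m₂) (Fin m₁ ⊕ Fin m₂) ℝ :=
      Matrix.fromBlocks 0 B (-Bᵀ) 0
    let I' : Matrix (Fin m₁ ⊕ Fin m₂) (Fin m₁ ⊕ Fin m₂) ℝ :=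
      Matrix.fromBlocks 1 0 0 (-1)
    let S := I' ⊗ₖ Sg + Sh ⊗ₖ (1 : Matrix (Fin n) (Fin n) ℝ)
    cSpec S =
      ((Finset.univ : Finset (Fin t × Fin r)).val.bind fun p =>
        Multiset.replicate 2
          (Complex.I * (Real.sqrt ((μ p.1) ^ 2 + (lam p.2) ^ 2) : ℂ)) +
        Multiset.replicate 2
          (-(Complex.I * (Real.sqrt ((μ p.1) ^ 2 + (lam p.2) ^ 2) : ℂ)))) +
      ((Finset.univ : Finset (Fin t)).val.bind fun j =>
        Multiset.replicate (n - 2 * r) (Complex.I * (μ j : ℂ)) +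
        Multiset.replicate (n - 2 * r) (-(Complex.I * (μ j : ℂ)))) +
      ((Finset.univ : Finset (Fin r)).val.bind fun k =>
        Multiset.replicate (m₁ + m₂ - 2 * t) (Complex.I * (lam k : ℂ)) +
        Multiset.replicate (m₁ + m₂ - 2 * t) (-(Complex.I * (lam k : ℂ)))) +
      Multiset.replicate ((m₁ + m₂ - 2 * t) * (n - 2 * r)) 0 := by
  intro Sh I' S
  have hShT : Shᵀ = -Sh := by simp [Sh, fromBlocks_transpose, fromBlocks_neg]
  have hI'T : I'ᵀ = I' := by simp [I', fromBlocks_transpose]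
  set zH := m₁ + m₂ - 2 * t
  set zG := n - 2 * r
  have hH : cSpec Sh = skewSpectrum (Finset.univ.val.map μ) zH := by
    simp [hSh, Sh, skewSpectrum, Function.comp_def]
  have hG : cSpec Sg = skewSpectrum (Finset.univ.val.map lam) zG := by
    simp [hSgspec, skewSpectrum, Function.comp_def]
  have hS2 : cSpec (S * S) = (skewSpectrum
      (cartesianRadii (Finset.univ.val.map μ) (Finset.univ.val.map lam) zH zG) (zH * zG)).map
      (· ^ 2) := by
    rw [kronecker_add_kronecker_one_mul_self_s11 fromBlocks_one_neg_one_mul_self_s11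
        (fromBlocks_one_neg_one_anticomm _ _),
      cSpec_kronecker_one_add_one_kronecker (by rw [transpose_mul, hShT, neg_mul_neg])
        (by rw [transpose_mul, hSg, neg_mul_neg]),
      (cSpec_eq_iff_cSpec_mul_self hShT (skewSpectrum_map_neg _ _)).mp hH,
      (cSpec_eq_iff_cSpec_mul_self hSg (skewSpectrum_map_neg _ _)).mp hG,
      skewSpectrum_cartesianRadii_map_sq]
  rw [(cSpec_eq_iff_cSpec_mul_self (transpose_kronecker_add_kronecker_one_s11 hI'T hShT hSg)
    (skewSpectrum_map_neg _ _)).mpr hS2, skewSpectrum_cartesianRadii_univ]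

/-- Skew spectrum of the modified Cartesian product: if the oriented bipartite graph
`H^τ` (with skew-adjacency matrix `Sh = [[0,B],[-Bᵀ,0]]`, order `m = m₁ + m₂`) has
nonzero skew eigenvalues `±iμ₁, …, ±iμ_t` together with `m - 2t` zeros, and `G^σ`
(skew-adjacency matrix `Sg`, order `n`) has nonzero skew eigenvalues
`±iλ₁, …, ±iλ_r` together with `n - 2r` zeros, then the oriented product
`(H^τ □ G^σ)^o`, with skew-adjacency matrix `S = I' ⊗ Sg + Sh ⊗ I`, has skew
eigenvalues `±i√(μ_j² + λ_k²)` each with multiplicity `2`, `±iμ_j` with multiplicity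
`n - 2r`, `±iλ_k` with multiplicity `m - 2t`, and `0` with multiplicity
`(m - 2t)(n - 2r)`. -/
theorem product_orientation_spectrum
    (m₁ m₂ n t r : ℕ)
    (B : Matrix (Fin m₁) (Fin m₂) ℝ)
    (Sg : Matrix (Fin n) (Fin n) ℝ) (hSg : Sgᵀ = -Sg)
    (μ : Fin t → ℝ) (lam : Fin r → ℝ)
    (hμ : ∀ j, μ j ≠ 0) (hlam : ∀ k, lam k ≠ 0)
    (hSh : cSpec (Matrix.fromBlocks 0 B (-Bᵀ) 0 :
        Matrix (Fin m₁ ⊕ Fin m₂) (Fin m₁ ⊕ Fin m₂) ℝ) =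
      (Finset.univ.val.map fun j => Complex.I * (μ j : ℂ)) +
      (Finset.univ.val.map fun j => -(Complex.I * (μ j : ℂ))) +
      Multiset.replicate (m₁ + m₂ - 2 * t) 0)
    (hSgspec : cSpec Sg =
      (Finset.univ.val.map fun k => Complex.I * (lam k : ℂ)) +
      (Finset.univ.val.map fun k => -(Complex.I * (lam k : ℂ))) +
      Multiset.replicate (n - 2 * r) 0) :
    let Sh : Matrix (Fin m₁ ⊕ Fin m₂) (Fin m₁ ⊕ Fin m₂) ℝ :=
      Matrix.fromBlocks 0 B (-Bᵀ) 0
    let I' : Matrix (Fin m₁ ⊕ Fin m₂) (Fin m₁ ⊕ Fin m₂) ℝ :=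
      Matrix.fromBlocks 1 0 0 (-1)
    let S := I' ⊗ₖ Sg + Sh ⊗ₖ (1 : Matrix (Fin n) (Fin n) ℝ)
    cSpec S =
      ((Finset.univ : Finset (Fin t × Fin r)).val.bind fun p =>
        Multiset.replicate 2
          (Complex.I * (Real.sqrt ((μ p.1) ^ 2 + (lam p.2) ^ 2) : ℂ)) +
        Multiset.replicate 2
          (-(Complex.I * (Real.sqrt ((μ p.1) ^ 2 + (lam p.2) ^ 2) : ℂ)))) +
      ((Finset.univ : Finset (Fin t)).val.bind fun j =>
        Multiset.replicate (n - 2 * r) (Complex.I * (μ j : ℂ)) +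
        Multiset.replicate (n - 2 * r) (-(Complex.I * (μ j : ℂ)))) +
      ((Finset.univ : Finset (Fin r)).val.bind fun k =>
        Multiset.replicate (m₁ + m₂ - 2 * t) (Complex.I * (lam k : ℂ)) +
        Multiset.replicate (m₁ + m₂ - 2 * t) (-(Complex.I * (lam k : ℂ)))) +
      Multiset.replicate ((m₁ + m₂ - 2 * t) * (n - 2 * r)) 0 :=
  product_orientation_spectrum_general m₁ m₂ n t r B Sg hSg μ lam hSh hSgspec
end

section
/- Let G^σ be an oriented k-regular graph on n vertices. Then E_S(G^σ) ≤ n√k, with equality if and only if S(G^σ)^T S(G^σ) = k I_n. -/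
open Matrix

noncomputable def skewEnergy {V : Type*} [Fintype V] [DecidableEq V]
    (S : Matrix V V ℝ) : ℝ :=
  ((cSpec S).map (fun z : ℂ => ‖z‖)).sum

/-!
Orienting `G` gives a real skew-symmetric `S`, so `i S` is Hermitian with real eigenvalues `μⱼ`
and the spectrum of `S` is `{-i μⱼ}`; hence `E_S = ∑ |μⱼ|`. Since `(i S)² = Sᵀ S`, we get
`∑ μⱼ² = tr (Sᵀ S) = ∑ deg = n k`, and Cauchy–Schwarz gives `∑ |μⱼ| ≤ n √k`, with equality iff
every `μⱼ² = k`, i.e. iff `Sᵀ S = k I` by the spectral theorem.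
-/

theorem Real.sum_abs_le_card_mul_sqrt {ι : Type*} [Fintype ι] {x : ι → ℝ} {a : ℝ}
    (h : ∑ i, x i ^ 2 ≤ Fintype.card ι * a) :
    ∑ i, |x i| ≤ Fintype.card ι * √a := by
  have hcs : (∑ i, |x i|) ^ 2 ≤ Fintype.card ι * ∑ i, x i ^ 2 := by
    simpa only [sq_abs, Finset.card_univ] using
      sq_sum_le_card_mul_sum_sq (s := Finset.univ) (f := fun i => |x i|)
  calc ∑ i, |x i| = √((∑ i, |x i|) ^ 2) := (Real.sqrt_sq (by positivity)).symm
    _ ≤ √((Fintype.card ι : ℝ) ^ 2 * a) := by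
      gcongr
      exact hcs.trans (by rw [sq, mul_assoc]; gcongr)
    _ = Fintype.card ι * √a := by rw [Real.sqrt_mul (by positivity), Real.sqrt_sq (by positivity)]

theorem Real.sum_abs_eq_card_mul_sqrt_iff {ι : Type*} [Fintype ι] {x : ι → ℝ} {a : ℝ}
    (ha : 0 ≤ a) (h : ∑ i, x i ^ 2 = Fintype.card ι * a) :
    ∑ i, |x i| = Fintype.card ι * √a ↔ ∀ i, x i ^ 2 = a := by
  constructor
  · intro heq i
    have hsq : √a ^ 2 = a := Real.sq_sqrt ha
    have hdev : ∑ i, (|x i| - √a) ^ 2 = 0 := by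
      simp only [sub_sq, Finset.sum_add_distrib, Finset.sum_sub_distrib, sq_abs, ← Finset.sum_mul,
        ← Finset.mul_sum, Finset.sum_const, Finset.card_univ, nsmul_eq_mul, h, heq]
      linear_combination (-(Fintype.card ι : ℝ)) * hsq
    have hi := (Finset.sum_eq_zero_iff_of_nonneg (fun i _ => sq_nonneg (|x i| - √a))).mp hdev i
      (Finset.mem_univ i)
    rw [← sq_abs, ← hsq, ← sub_eq_zero.mp (pow_eq_zero_iff two_ne_zero |>.mp hi)]
  · intro hx
    simp only [← Real.sqrt_sq_eq_abs, hx, Finset.sum_const, Finset.card_univ, nsmul_eq_mul]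

open Unitary

namespace Matrix

theorem roots_charpoly_diagonal {n R : Type*} [Fintype n] [DecidableEq n] [CommRing R]
    [IsDomain R] (d : n → R) : (diagonal d).charpoly.roots = Finset.univ.val.map d := by
  rw [charpoly_diagonal, ← Polynomial.roots_multiset_prod_X_sub_C (Finset.univ.val.map d),
    Multiset.map_map]
  rfl

section Conjugation

variable {n R : Type*} [Fintype n] [DecidableEq n] [CommRing R] [StarRing R]

theorem charpoly_conjStarAlgAut (u : unitary (Matrix n n R)) (A : Matrix n n R) :
    (conjStarAlgAut R _ u A).charpoly = A.charpoly := by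
  rw [conjStarAlgAut_apply, charpoly_mul_comm, ← mul_assoc, Unitary.coe_star_mul_self, one_mul]

theorem trace_conjStarAlgAut (u : unitary (Matrix n n R)) (A : Matrix n n R) :
    (conjStarAlgAut R _ u A).trace = A.trace := by
  rw [conjStarAlgAut_apply, trace_mul_cycle, Unitary.coe_star_mul_self, one_mul]

end Conjugation

section Hermitian

variable {𝕜 n : Type*} [RCLike 𝕜] [Fintype n] [DecidableEq n]

theorem IsHermitian.mul_self_eq_conjStarAlgAut {A : Matrix n n 𝕜} (hA : A.IsHermitian) :
    A * A = conjStarAlgAut 𝕜 _ hA.eigenvectorUnitary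
      (diagonal fun i => ((hA.eigenvalues i ^ 2 : ℝ) : 𝕜)) := by
  conv_lhs => rw [hA.spectral_theorem, ← map_mul, diagonal_mul_diagonal]
  simp [sq]

theorem IsHermitian.trace_mul_self {A : Matrix n n 𝕜} (hA : A.IsHermitian) :
    (A * A).trace = ∑ i, ((hA.eigenvalues i ^ 2 : ℝ) : 𝕜) := by
  rw [hA.mul_self_eq_conjStarAlgAut, trace_conjStarAlgAut, trace_diagonal]

theorem IsHermitian.mul_self_eq_smul_one_iff {A : Matrix n n 𝕜} (hA : A.IsHermitian) (c : ℝ) :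
    A * A = (c : 𝕜) • (1 : Matrix n n 𝕜) ↔ ∀ i, hA.eigenvalues i ^ 2 = c := by
  have hscalar : (c : 𝕜) • (1 : Matrix n n 𝕜) =
      conjStarAlgAut 𝕜 _ hA.eigenvectorUnitary ((c : 𝕜) • 1) := by
    rw [map_smul, map_one]
  rw [hA.mul_self_eq_conjStarAlgAut, hscalar, EquivLike.apply_eq_iff_eq, smul_one_eq_diagonal,
    diagonal_eq_diagonal_iff]
  simp only [RCLike.ofReal_inj]

end Hermitian

theorem isHermitian_I_smul_map_ofReal {n : Type*} {S : Matrix n n ℝ} (hS : Sᵀ = -S) :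
    (Complex.I • S.map Complex.ofReal).IsHermitian := by
  have hM : (S.map Complex.ofReal)ᴴ = -S.map Complex.ofReal := by
    rw [← conjTranspose_map _ (fun x => by simp), conjTranspose_eq_transpose_of_trivial, hS,
      Matrix.map_neg _ Complex.ofReal_neg]
  rw [IsHermitian, conjTranspose_smul, hM, smul_neg, ← neg_smul, Complex.star_def, Complex.conj_I,
    neg_neg]

theorem I_smul_map_ofReal_mul_self {n : Type*} [Fintype n] {S : Matrix n n ℝ} (hS : Sᵀ = -S) :
    (Complex.I • S.map Complex.ofReal) * (Complex.I • S.map Complex.ofReal) =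
      (Sᵀ * S).map Complex.ofReal := by
  rw [smul_mul_smul_comm, Complex.I_mul_I, neg_one_smul, hS, neg_mul,
    Matrix.map_neg _ Complex.ofReal_neg]
  exact congrArg Neg.neg (Matrix.map_mul (f := Complex.ofRealHom)).symm

section SkewSymmetric

variable {n : Type*} [Fintype n] [DecidableEq n] {S : Matrix n n ℝ}

noncomputable def skewEigenvalues (hS : Sᵀ = -S) : n → ℝ :=
  (isHermitian_I_smul_map_ofReal hS).eigenvalues

theorem cSpec_eq_map_skewEigenvalues (hS : Sᵀ = -S) :
    cSpec S = Finset.univ.val.map fun i => -Complex.I * skewEigenvalues hS i := by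
  have hH := isHermitian_I_smul_map_ofReal hS
  have hM : S.map Complex.ofReal = (-Complex.I) • (Complex.I • S.map Complex.ofReal) := by
    rw [smul_smul, neg_mul, Complex.I_mul_I, neg_neg, one_smul]
  rw [cSpec, hM, hH.spectral_theorem, ← map_smul, charpoly_conjStarAlgAut, ← diagonal_smul,
    roots_charpoly_diagonal]
  rfl

theorem skewEnergy_eq_sum_abs_skewEigenvalues (hS : Sᵀ = -S) :
    skewEnergy S = ∑ i, |skewEigenvalues hS i| := by
  rw [skewEnergy, cSpec_eq_map_skewEigenvalues hS, Multiset.map_map]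
  simp

theorem sum_sq_skewEigenvalues (hS : Sᵀ = -S) :
    ∑ i, skewEigenvalues hS i ^ 2 = (Sᵀ * S).trace := by
  have h := (isHermitian_I_smul_map_ofReal hS).trace_mul_self
  rw [I_smul_map_ofReal_mul_self hS] at h
  apply Complex.ofReal_injective
  simpa [trace, skewEigenvalues] using h.symm

theorem transpose_mul_self_eq_smul_one_iff (hS : Sᵀ = -S) (c : ℝ) :
    Sᵀ * S = c • (1 : Matrix n n ℝ) ↔ ∀ i, skewEigenvalues hS i ^ 2 = c := by
  rw [skewEigenvalues, ← (isHermitian_I_smul_map_ofReal hS).mul_self_eq_smul_one_iff,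
    I_smul_map_ofReal_mul_self hS]
  have hscalar : (RCLike.ofReal c : ℂ) • (1 : Matrix n n ℂ) =
      (c • (1 : Matrix n n ℝ)).map Complex.ofReal := by
    ext i j
    by_cases h : i = j <;> simp [h]
  rw [hscalar, (Matrix.map_injective Complex.ofReal_injective).eq_iff]

end SkewSymmetric

end Matrix

namespace IsSkewAdj

variable {V : Type*} [Fintype V] [DecidableEq V] {G : SimpleGraph V} [DecidableRel G.Adj]
  {S : Matrix V V ℝ}

theorem sq_apply (hS : IsSkewAdj G S) (i j : V) : S i j ^ 2 = if G.Adj i j then 1 else 0 := by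
  by_cases h : G.Adj i j
  · rcases hS.1 i j h with h' | h' <;> simp [h, h']
  · simp [h, hS.2.1 i j h]

theorem trace_transpose_mul_self (hS : IsSkewAdj G S) :
    (Sᵀ * S).trace = ∑ i, (G.degree i : ℝ) := by
  rw [trace_mul_comm]
  refine Finset.sum_congr rfl fun i _ => ?_
  simp only [diag_apply, mul_apply, transpose_apply, ← sq, hS.sq_apply, Finset.sum_boole]
  rw [← SimpleGraph.card_neighborFinset_eq_degree, SimpleGraph.neighborFinset_eq_filter]

end IsSkewAdj

/-- For an oriented `k`-regular graph on `n` vertices, the skew energy is at most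
`n√k`, with equality if and only if `S(G^σ)ᵀ S(G^σ) = k Iₙ`. -/
theorem skewEnergy_le_of_regular
    {V : Type*} [Fintype V] [DecidableEq V]
    (G : SimpleGraph V) [DecidableRel G.Adj] (k : ℕ) (hreg : G.IsRegularOfDegree k)
    (S : Matrix V V ℝ) (hS : IsSkewAdj G S) :
    skewEnergy S ≤ (Fintype.card V : ℝ) * Real.sqrt k ∧
    (skewEnergy S = (Fintype.card V : ℝ) * Real.sqrt k ↔
      Sᵀ * S = (k : ℝ) • (1 : Matrix V V ℝ)) := by
  have hskew : Sᵀ = -S := hS.2.2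
  have hsq : ∑ i, skewEigenvalues hskew i ^ 2 = Fintype.card V * k := by
    rw [sum_sq_skewEigenvalues, hS.trace_transpose_mul_self]
    simp [hreg.degree_eq, Finset.card_univ]
  rw [skewEnergy_eq_sum_abs_skewEigenvalues hskew, transpose_mul_self_eq_smul_one_iff hskew]
  exact ⟨Real.sum_abs_le_card_mul_sqrt hsq.le,
    Real.sum_abs_eq_card_mul_sqrt_iff (Nat.cast_nonneg k) hsq⟩
end

section
/- Let A be an m×m real skew-symmetric matrix with A^T A = ℓ I_m which in some basis has block form [[0,B],[−B^T,0]], let C be an n×n real skew-symmetric matrix with C^T C = k I_n, and set I' = diag(I_{m_1}, −I_{m_2}) compatible with the block structure. Then S = I' ⊗ C + A ⊗ I_n satisfies S^T S = (ℓ + k) I_{mn}. -/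
/-!
Expanding `Sᵀ S` gives `(I'ᵀ I') ⊗ CᵀC + (AᵀA) ⊗ 1` plus the cross terms
`(I'ᵀ A) ⊗ Cᵀ + (Aᵀ I') ⊗ C`. The sign pattern of `I' = diag(1, -1)` against the off-diagonal
block form of `A` gives `Aᵀ I' = I'ᵀ A`, so by skew-symmetry of `C` the cross terms add up to
`(I'ᵀ A) ⊗ (Cᵀ + C) = 0`.
-/

open Matrix Kronecker

namespace Matrix

variable {R : Type*} [CommRing R] {m n : Type*} [Fintype m] [DecidableEq m] [Fintype n]
  [DecidableEq n]

theorem transpose_mul_self_kronecker_add_kronecker_one (J A : Matrix m m R) (C : Matrix n n R)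
    (hJ : Jᵀ * J = 1) (hAJ : Aᵀ * J = Jᵀ * A) (hC : Cᵀ = -C) :
    (J ⊗ₖ C + A ⊗ₖ 1)ᵀ * (J ⊗ₖ C + A ⊗ₖ 1) = 1 ⊗ₖ (Cᵀ * C) + (Aᵀ * A) ⊗ₖ 1 := by
  have hCC : Cᵀ + C = 0 := by rw [hC, neg_add_cancel]
  calc (J ⊗ₖ C + A ⊗ₖ 1)ᵀ * (J ⊗ₖ C + A ⊗ₖ 1)
      = (Jᵀ * J) ⊗ₖ (Cᵀ * C) + (Jᵀ * A) ⊗ₖ (Cᵀ + C) + (Aᵀ * A) ⊗ₖ 1 := by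
        simp only [transpose_add, ← kroneckerMap_transpose, transpose_one, add_mul, mul_add,
          ← mul_kronecker_mul, mul_one, one_mul, hAJ, kronecker_add]
        abel
    _ = 1 ⊗ₖ (Cᵀ * C) + (Aᵀ * A) ⊗ₖ 1 := by rw [hJ, hCC, kronecker_zero, add_zero]

variable {m₁ m₂ : Type*} [Fintype m₁] [DecidableEq m₁] [Fintype m₂] [DecidableEq m₂]

theorem transpose_mul_self_fromBlocks_one_neg_one :
    (fromBlocks 1 0 0 (-1) : Matrix (m₁ ⊕ m₂) (m₁ ⊕ m₂) R)ᵀ * fromBlocks 1 0 0 (-1) = 1 := by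
  simp [fromBlocks_transpose, fromBlocks_multiply, fromBlocks_one]

theorem transpose_fromBlocks_skew_mul_fromBlocks_one_neg_one (B : Matrix m₁ m₂ R) :
    (fromBlocks 0 B (-Bᵀ) 0)ᵀ * fromBlocks 1 0 0 (-1) =
      (fromBlocks 1 0 0 (-1))ᵀ * fromBlocks 0 B (-Bᵀ) 0 := by
  simp [fromBlocks_transpose, fromBlocks_multiply]

end Matrix

/-- If `A = [[0,B],[-Bᵀ,0]]` is skew-symmetric with `Aᵀ A = ℓ I`, `C` is skew-symmetric
with `Cᵀ C = k I`, and `I' = diag(I, -I)`, then `S = I' ⊗ C + A ⊗ I` satisfies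
`Sᵀ S = (ℓ + k) I`. -/
theorem kronecker_max_energy_matrix
    (m₁ m₂ n : ℕ) (ℓ k : ℝ)
    (B : Matrix (Fin m₁) (Fin m₂) ℝ)
    (hA : (Matrix.fromBlocks 0 B (-Bᵀ) 0 :
        Matrix (Fin m₁ ⊕ Fin m₂) (Fin m₁ ⊕ Fin m₂) ℝ)ᵀ *
      Matrix.fromBlocks 0 B (-Bᵀ) 0 = ℓ • 1)
    (C : Matrix (Fin n) (Fin n) ℝ) (hCskew : Cᵀ = -C)
    (hC : Cᵀ * C = k • 1) :
    let A : Matrix (Fin m₁ ⊕ Fin m₂) (Fin m₁ ⊕ Fin m₂) ℝ :=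
      Matrix.fromBlocks 0 B (-Bᵀ) 0
    let I' : Matrix (Fin m₁ ⊕ Fin m₂) (Fin m₁ ⊕ Fin m₂) ℝ :=
      Matrix.fromBlocks 1 0 0 (-1)
    let S := I' ⊗ₖ C + A ⊗ₖ (1 : Matrix (Fin n) (Fin n) ℝ)
    Sᵀ * S = (ℓ + k) • 1 := by
  intro A I' S
  rw [transpose_mul_self_kronecker_add_kronecker_one I' A C
    transpose_mul_self_fromBlocks_one_neg_one
    (transpose_fromBlocks_skew_mul_fromBlocks_one_neg_one B) hCskew, hA, hC,
    kronecker_smul, smul_kronecker, one_kronecker_one, add_smul, add_comm]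
end

section
/- There exists, for every r ≥ 1, a 4r-regular graph on 2^{3r} vertices admitting an orientation with maximum skew energy 2^{3r}·√(4r); namely the iterated Cartesian product G_r = K_{4,4} □ G_{r−1} with G_1 = K_{4,4}, given that K_{4,4} has an orientation τ with S(K_{4,4}^τ)^T S(K_{4,4}^τ) = 4 I_8. -/
open Matrix

/-!
If `A` orients a bipartite `H` with `AᵀA = ℓ I`, `B` orients `G` with `BᵀB = k I`, and `E` is the
`±1` diagonal matrix of a bipartition of `H`, then `A ⊗ I + E ⊗ B` orients `H □ G`; since `A` only
joins the two sides, `AE = -EA`, the cross terms of its Gram matrix cancel, and what is left is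
`(ℓ + k) I`. Iterating with `H = K₄,₄`, starting from the one-vertex graph, gives the graphs `G_r`.
Skew-symmetry turns `SᵀS = d I` into `S² = -d I`, so every eigenvalue has modulus `√d`, which is the
energy; the diagonal of `SᵀS` counts degrees, which is the regularity.
-/

open Polynomial Kronecker

theorem Matrix.sq_eq_of_isRoot_charpoly {K n : Type*} [Field K] [Fintype n] [DecidableEq n]
    {M : Matrix n n K} {c : K} (hM : M * M = c • 1) {t : K} (ht : M.charpoly.IsRoot t) :
    t ^ 2 = c := by
  have hσ := spectrum.subset_polynomial_aeval M (X ^ 2)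
    ⟨t, mem_spectrum_iff_isRoot_charpoly.2 ht, rfl⟩
  cases subsingleton_or_nontrivial (Matrix n n K)
  · simp [spectrum.of_subsingleton] at hσ
  · simp only [eval_pow, eval_X, map_pow, aeval_X] at hσ
    rwa [sq, hM, ← Algebra.algebraMap_eq_smul_one,
      spectrum.scalar_eq, Set.mem_singleton_iff] at hσ

theorem skewEnergy_eq_of_transpose_mul_self {n : Type*} [Fintype n] [DecidableEq n]
    {S : Matrix n n ℝ} {d : ℝ} (hd : 0 ≤ d) (hskew : Sᵀ = -S) (hS : Sᵀ * S = d • 1) :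
    skewEnergy S = Fintype.card n * √d := by
  set M := S.map Complex.ofReal
  have hM : M * M = (-d : ℂ) • 1 := by
    have hSS : S * S = (-d) • 1 := by rw [neg_smul, ← hS, hskew, neg_mul, neg_neg]
    ext i j
    simpa [M, mul_apply, one_apply, apply_ite Complex.ofReal] using
      congrArg Complex.ofReal (congrFun (congrFun hSS i) j)
  have hnorm : ∀ t ∈ M.charpoly.roots, ‖t‖ = √d := by
    intro t ht
    have ht2 := congrArg norm (Matrix.sq_eq_of_isRoot_charpoly hM (isRoot_of_mem_roots ht))
    rw [norm_pow, norm_neg, Complex.norm_real, Real.norm_of_nonneg hd] at ht2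
    rw [← ht2, Real.sqrt_sq (norm_nonneg t)]
  rw [skewEnergy, cSpec, Multiset.map_congr rfl hnorm, Multiset.map_const', Multiset.sum_replicate,
    IsAlgClosed.card_roots_eq_natDegree, charpoly_natDegree_eq_dim, nsmul_eq_mul]

section SkewAdj

variable {V : Type*} [Fintype V] [DecidableEq V] {G : SimpleGraph V} {S : Matrix V V ℝ}

theorem IsSkewAdj.apply_self (hS : IsSkewAdj G S) (v : V) : S v v = 0 :=
  hS.2.1 v v G.irrefl

theorem IsSkewAdj.transpose_mul_self_apply_self [DecidableRel G.Adj] (hS : IsSkewAdj G S)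
    (v : V) : (Sᵀ * S) v v = G.degree v := by
  have hsq : ∀ u, S u v * S u v = if G.Adj v u then 1 else 0 := by
    intro u
    split_ifs with h
    · rcases hS.1 u v h.symm with h' | h' <;> simp [h']
    · simp [hS.2.1 u v (fun h' => h h'.symm)]
  simp only [mul_apply, transpose_apply, hsq, Finset.sum_boole,
    ← SimpleGraph.card_neighborFinset_eq_degree, SimpleGraph.neighborFinset_eq_filter]

theorem IsSkewAdj.isRegularOfDegree [DecidableRel G.Adj] {d : ℕ} (hS : IsSkewAdj G S)
    (hSS : Sᵀ * S = (d : ℝ) • 1) : G.IsRegularOfDegree d := fun v => by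
  have h := hS.transpose_mul_self_apply_self v
  rw [hSS] at h
  exact_mod_cast (by simpa using h : (d : ℝ) = G.degree v).symm

theorem IsSkewAdj.comap {W : Type*} [Fintype W] [DecidableEq W] (hS : IsSkewAdj G S)
    (f : W → V) : IsSkewAdj (G.comap f) (S.submatrix f f) :=
  ⟨fun i j h => hS.1 _ _ h, fun i j h => hS.2.1 _ _ h, by
    rw [transpose_submatrix, hS.2.2, submatrix_neg]; rfl⟩

end SkewAdj

theorem Matrix.transpose_mul_self_kronecker_one_add {R α β : Type*} [CommRing R]
    [Fintype α] [DecidableEq α] [Fintype β] [DecidableEq β]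
    {A E : Matrix α α R} {B : Matrix β β R} {ℓ k : R}
    (hA : Aᵀ * A = ℓ • 1) (hB : Bᵀ * B = k • 1) (hE : Eᵀ * E = 1)
    (hBskew : Bᵀ = -B) (hAE : Aᵀ * E = Eᵀ * A) :
    (A ⊗ₖ 1 + E ⊗ₖ B)ᵀ * (A ⊗ₖ 1 + E ⊗ₖ B) = (ℓ + k) • 1 := by
  have hcross : (Eᵀ * A) ⊗ₖ (Bᵀ * 1) + (Aᵀ * E) ⊗ₖ (1 * B) = 0 := by
    rw [hAE, hBskew, mul_one, one_mul, ← kronecker_add, neg_add_cancel, kronecker_zero]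
  calc (A ⊗ₖ 1 + E ⊗ₖ B)ᵀ * (A ⊗ₖ 1 + E ⊗ₖ B)
      = (Aᵀ * A) ⊗ₖ (1 * 1) + (Eᵀ * E) ⊗ₖ (Bᵀ * B)
          + ((Eᵀ * A) ⊗ₖ (Bᵀ * 1) + (Aᵀ * E) ⊗ₖ (1 * B)) := by
        rw [transpose_add, ← kroneckerMap_transpose, ← kroneckerMap_transpose, transpose_one,
          add_mul, mul_add, mul_add, ← mul_kronecker_mul, ← mul_kronecker_mul,
          ← mul_kronecker_mul, ← mul_kronecker_mul]
        abel
    _ = (ℓ + k) • 1 := by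
        rw [hcross, add_zero, hA, hE, hB, one_mul, smul_kronecker, kronecker_smul,
          one_kronecker_one, add_smul]

theorem IsSkewAdj.boxProd {α β : Type*} [Fintype α] [DecidableEq α] [Fintype β] [DecidableEq β]
    {H : SimpleGraph α} {G : SimpleGraph β} {A : Matrix α α ℝ} {B : Matrix β β ℝ}
    {ε : α → ℝ} (hε : ∀ a, ε a = 1 ∨ ε a = -1) (hA : IsSkewAdj H A) (hB : IsSkewAdj G B) :
    IsSkewAdj (H □ G) (A ⊗ₖ 1 + diagonal ε ⊗ₖ B) := by
  have happly : ∀ a a' b b', (A ⊗ₖ (1 : Matrix β β ℝ) + diagonal ε ⊗ₖ B) (a, b) (a', b') =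
      (if b = b' then A a a' else 0) + (if a = a' then ε a * B b b' else 0) := by
    intro a a' b b'
    simp [one_apply, diagonal_apply, ite_mul]
  refine ⟨?_, ?_, ?_⟩
  · rintro ⟨a, b⟩ ⟨a', b'⟩ (⟨hH, rfl⟩ | ⟨hG, rfl⟩)
    · simpa [happly, hH.ne] using hA.1 a a' hH
    · rcases hε a with h | h <;> rcases hB.1 b b' hG with h' | h' <;>
        simp [happly, hG.ne, h, h']
  · rintro ⟨a, b⟩ ⟨a', b'⟩ hadj
    rw [happly]
    by_cases hb : b = b' <;> by_cases ha : a = a' <;> subst_vars <;>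
      simp_all [hA.apply_self, hB.apply_self, hA.2.1, hB.2.1]
  · ext ⟨a, b⟩ ⟨a', b'⟩
    have hA' := congrFun (congrFun hA.2.2 a) a'
    have hB' := congrFun (congrFun hB.2.2 b) b'
    simp only [transpose_apply, Matrix.neg_apply] at hA' hB' ⊢
    rw [happly, happly, hA', hB']
    simp only [eq_comm (a := b'), eq_comm (a := a')]
    split_ifs <;> subst_vars <;> ring

/-- For a `d`-regular `G`, these are exactly the orientations of maximum skew energy `|V| √d`. -/
def SimpleGraph.HasOptimumOrientation {V : Type*} [Fintype V] [DecidableEq V]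
    (G : SimpleGraph V) (d : ℝ) : Prop :=
  ∃ S : Matrix V V ℝ, IsSkewAdj G S ∧ Sᵀ * S = d • 1

namespace SimpleGraph.HasOptimumOrientation

variable {α β : Type*} [Fintype α] [DecidableEq α] [Fintype β] [DecidableEq β]

theorem bot : (⊥ : SimpleGraph α).HasOptimumOrientation 0 :=
  ⟨0, ⟨fun _ _ h => h.elim, fun _ _ _ => rfl, by simp⟩, by simp⟩

theorem comap_equiv {G : SimpleGraph α} {d : ℝ} (h : G.HasOptimumOrientation d) (e : β ≃ α) :
    (G.comap e).HasOptimumOrientation d := by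
  obtain ⟨S, hS, hSS⟩ := h
  refine ⟨S.submatrix e e, hS.comap e, ?_⟩
  rw [transpose_submatrix, submatrix_mul_equiv, hSS, ← submatrix_one_equiv e]
  rfl

theorem boxProd {H : SimpleGraph α} {G : SimpleGraph β} {ℓ k : ℝ} (hH : H.IsBipartite)
    (h₁ : H.HasOptimumOrientation ℓ) (h₂ : G.HasOptimumOrientation k) :
    (H □ G).HasOptimumOrientation (ℓ + k) := by
  classical
  obtain ⟨A, hA, hAA⟩ := h₁
  obtain ⟨B, hB, hBB⟩ := h₂
  obtain ⟨s, t, hst⟩ := hH.exists_isBipartiteWith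
  set ε : α → ℝ := fun a => if a ∈ s then 1 else -1
  have hε : ∀ a, ε a = 1 ∨ ε a = -1 := fun a => by by_cases ha : a ∈ s <;> simp [ε, ha]
  have hE : (diagonal ε)ᵀ * diagonal ε = 1 := by
    rw [diagonal_transpose, diagonal_mul_diagonal, ← diagonal_one]
    congr 1
    funext a
    rcases hε a with h | h <;> simp [h]
  have hAE : Aᵀ * diagonal ε = (diagonal ε)ᵀ * A := by
    ext a a'
    by_cases hadj : H.Adj a a'
    · have hdisj := Set.disjoint_right.1 hst.disjoint
      rcases hst.mem_of_adj hadj with ⟨ha, ha'⟩ | ⟨ha, ha'⟩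
      · simp [hA.2.2, ε, ha, hdisj ha']
      · simp [hA.2.2, ε, ha', hdisj ha]
    · simp [hA.2.2, hA.2.1 a a' hadj]
  exact ⟨_, hA.boxProd hε hB, transpose_mul_self_kronecker_one_add hAA hBB hE hB.2.2 hAE⟩

theorem exists_fin_pow {H : SimpleGraph α} {ℓ : ℝ} (hH : H.IsBipartite)
    (h : H.HasOptimumOrientation ℓ) (r : ℕ) :
    ∃ G : SimpleGraph (Fin (Fintype.card α ^ r)), G.HasOptimumOrientation (r * ℓ) := by
  induction r with
  | zero => exact ⟨⊥, by rw [Nat.cast_zero, zero_mul]; exact bot⟩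
  | succ r ih =>
    obtain ⟨G, hG⟩ := ih
    have e : Fin (Fintype.card α ^ (r + 1)) ≃ α × Fin (Fintype.card α ^ r) :=
      Fintype.equivOfCardEq (by simp [pow_succ, mul_comm])
    refine ⟨(H □ G).comap e, ?_⟩
    convert (h.boxProd hH hG).comap_equiv e using 1
    push_cast
    ring

end SimpleGraph.HasOptimumOrientation

/-- For every `r ≥ 1` there is a `4r`-regular graph on `2^(3r)` vertices admitting an
orientation with maximum skew energy `2^(3r) · √(4r)` (equivalently, whose
skew-adjacency matrix `S` satisfies `Sᵀ S = 4r · I`). -/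
theorem exists_max_energy_4r_regular
    (hK44 : ∃ SK : Matrix (Fin 4 ⊕ Fin 4) (Fin 4 ⊕ Fin 4) ℝ,
      IsSkewAdj (completeBipartiteGraph (Fin 4) (Fin 4)) SK ∧
      SKᵀ * SK = (4 : ℝ) • 1) :
    ∀ r : ℕ, 1 ≤ r →
      ∃ (G : SimpleGraph (Fin (2 ^ (3 * r)))) (_ : DecidableRel G.Adj)
        (S : Matrix (Fin (2 ^ (3 * r))) (Fin (2 ^ (3 * r))) ℝ),
        G.IsRegularOfDegree (4 * r) ∧ IsSkewAdj G S ∧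
        Sᵀ * S = ((4 * r : ℕ) : ℝ) • 1 ∧
        skewEnergy S = (2 ^ (3 * r) : ℝ) * Real.sqrt ((4 * r : ℕ) : ℝ) := by
  classical
  intro r _
  have hK : (completeBipartiteGraph (Fin 4) (Fin 4)).IsBipartite :=
    (SimpleGraph.CompleteBipartiteGraph.bicoloring (Fin 4) (Fin 4)).colorable
  obtain ⟨G, hG⟩ := SimpleGraph.HasOptimumOrientation.exists_fin_pow hK hK44 r
  have hcard : 2 ^ (3 * r) = Fintype.card (Fin 4 ⊕ Fin 4) ^ r := by simp [pow_mul]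
  obtain ⟨S, hS, hSS⟩ := hG.comap_equiv (finCongr hcard)
  rw [show (r : ℝ) * 4 = ((4 * r : ℕ) : ℝ) by push_cast; ring] at hSS
  refine ⟨_, inferInstance, S, hS.isRegularOfDegree hSS, hS, hSS, ?_⟩
  rw [skewEnergy_eq_of_transpose_mul_self (Nat.cast_nonneg _) hS.2.2 hSS, Fintype.card_fin]
  push_cast
  rfl
end
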